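/- arXiv:1006.5959 — 5 statements merged into one kernel-verified Lean document; each statement's English description precedes it below -/
import Mathlib

section
/- Let S be the ring of integers in a finite unramified extension L of Q_ℓ with normalized valuation ν (ν(ℓ)=1). Let T be a finitely generated free S-module and x an S-linear endomorphism of T whose reduction mod ℓ is nilpotent with Jordan cell sizes m₁ ≥ … ≥ m_r. Let Q(t) = Σ a_i t^{d-i} be the characteristic polynomial of x on T⊗L. Then for every s with 1 ≤ s ≤ r and every m with m₁+…+m_{s-1} < m ≤ m₁+…+m_s, one has ν(a_m) ≥ s. (Equivalently: the Newton polygon of Q lies on or above the Young polygon of x mod ℓ.) -/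
open scoped Classical

set_option maxHeartbeats 1000000

/-- The nilpotent Jordan matrix with cells of sizes `m 0 ≥ m 1 ≥ … ≥ m (r-1)`,
realized as a `d × d` matrix (where `d = ∑ i, m i`): it has a `1` in position
`(i, j)` exactly when `i = j + 1` and `i` is not a cumulative block boundary. -/
noncomputable def jordanNilpotent (r d : ℕ) (m : Fin r → ℕ) (K : Type*) [CommRing K] :
    Matrix (Fin d) (Fin d) K :=
  Matrix.of fun i j =>
    if (i : ℕ) = (j : ℕ) + 1 ∧ ∀ s : Fin r, (i : ℕ) ≠ ∑ t ∈ Finset.Iic s, m t then 1 else 0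



lemma npYoung.coe_le_of_strictMono {k r : ℕ} {f : Fin k → Fin r} (hf : StrictMono f)
    (j : Fin k) : (j : ℕ) ≤ (f j : ℕ) := by
  obtain ⟨j, hj⟩ := j
  induction j with
  | zero => exact Nat.zero_le _
  | succ n ih =>
    have hn : n < k := by omega
    have h2 : ((f ⟨n, hn⟩ : Fin r) : ℕ) < ((f ⟨n + 1, hj⟩ : Fin r) : ℕ) :=
      hf (by simp [Fin.lt_def])
    have h3 := ih hn
    simp only [Fin.val_mk] at h3 ⊢
    omega

lemma npYoung.sum_le_sum_Iio {r : ℕ} {m : Fin r → ℕ} (hm : Antitone m) (s₀ : Fin r)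
    (F : Finset (Fin r)) (hF : F.card ≤ (s₀ : ℕ)) :
    ∑ t ∈ F, m t ≤ ∑ t ∈ Finset.Iio s₀, m t := by
  classical
  set k := F.card with hk
  let e := F.orderEmbOfFin hk.symm
  have hmem : ∀ j : Fin k, e j ∈ F := fun j => F.orderEmbOfFin_mem hk.symm j
  have himg : Finset.image (fun j => e j) Finset.univ = F := by
    apply Finset.eq_of_subset_of_card_le
    · intro t ht
      obtain ⟨j, _, rfl⟩ := Finset.mem_image.mp ht
      exact hmem j
    · rw [Finset.card_image_of_injective _ e.injective, Finset.card_univ, Fintype.card_fin]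
  have hsum : ∑ t ∈ F, m t = ∑ j : Fin k, m (e j) := by
    rw [← himg, Finset.sum_image (fun a _ b _ h => e.injective h)]
  rw [hsum]
  -- each e j ≥ j, so m (e j) ≤ m ⟨j, _⟩ with j < s₀ ≤ r
  have hjr : ∀ j : Fin k, (j : ℕ) < r := fun j => lt_of_lt_of_le (by
      have := npYoung.coe_le_of_strictMono e.strictMono j
      have := (e j).isLt
      omega) (le_refl r)
  have hle : ∀ j : Fin k, m (e j) ≤ m ⟨(j : ℕ), hjr j⟩ := by
    intro j
    apply hm
    exact npYoung.coe_le_of_strictMono e.strictMono j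
  calc ∑ j : Fin k, m (e j) ≤ ∑ j : Fin k, m ⟨(j : ℕ), hjr j⟩ :=
        Finset.sum_le_sum fun j _ => hle j
    _ = ∑ t ∈ Finset.image (fun j : Fin k => (⟨(j : ℕ), hjr j⟩ : Fin r)) Finset.univ, m t :=
        (Finset.sum_image (fun a _ b _ h => Fin.ext (by simpa using congrArg Fin.val h))).symm
    _ ≤ ∑ t ∈ Finset.Iio s₀, m t := by
        apply Finset.sum_le_sum_of_subset
        intro t ht
        obtain ⟨j, _, rfl⟩ := Finset.mem_image.mp ht
        simp only [Finset.mem_Iio, Fin.lt_def, Fin.val_mk]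
        omega


section
variable {r d : ℕ} {m : Fin r → ℕ}

/-- Cumulative sums. -/
private def Csum (m : Fin r → ℕ) (s : Fin r) : ℕ := ∑ t ∈ Finset.Iic s, m t

lemma Csum_exists (hsum : ∑ i, m i = d) (k : Fin d) : ∃ s : Fin r, (k : ℕ) < Csum m s := by
  rcases r with - | r'
  · exfalso
    have : d = 0 := by simpa using hsum.symm
    exact absurd k.isLt (by omega)
  · refine ⟨Fin.last r', ?_⟩
    have : Finset.Iic (Fin.last r') = Finset.univ := by
      apply Finset.eq_univ_iff_forall.mpr
      intro t; simpa using Fin.le_last t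
    rw [Csum, this, hsum]
    exact k.isLt

lemma Bsum_add (s : Fin r) : Csum m s = (∑ t ∈ Finset.Iio s, m t) + m s := by
  rw [Csum, ← Finset.Iio_insert, Finset.sum_insert (by simp)]
  ring
end

section
variable {r d : ℕ} {m : Fin r → ℕ}

lemma exists_zero_entries
    (hm : Antitone m) (hsum : ∑ i, m i = d)
    (s₀ : Fin r) (I : Finset (Fin d)) (hI : (∑ t ∈ Finset.Iio s₀, m t) < I.card)
    (σ : Equiv.Perm (Fin d)) (hσ : ∀ k ∈ I, σ k ∈ I) :
    ∃ T ⊆ I, T.card = (s₀ : ℕ) + 1 ∧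
      ∀ k ∈ T, ¬ (((σ k : Fin d) : ℕ) = (k : ℕ) + 1 ∧
        ∀ s : Fin r, ((σ k : Fin d) : ℕ) ≠ ∑ t ∈ Finset.Iic s, m t) := by
  classical
  have hne : ∀ k : Fin d, (Finset.univ.filter fun s : Fin r => (k:ℕ) < Csum m s).Nonempty := by
    intro k
    obtain ⟨s, hs⟩ := Csum_exists hsum k
    exact ⟨s, by simp [hs]⟩
  set blk : Fin d → Fin r := fun k => (Finset.univ.filter fun s => (k:ℕ) < Csum m s).min' (hne k) with hblk
  have hblk_lt : ∀ k : Fin d, (k:ℕ) < Csum m (blk k) := by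
    intro k
    have := Finset.min'_mem _ (hne k)
    simpa using this
  have hblk_min : ∀ (k : Fin d) (s : Fin r), (k:ℕ) < Csum m s → blk k ≤ s := by
    intro k s hs
    exact Finset.min'_le _ _ (by simp [hs])
  have hblk_b : ∀ k : Fin d, (∑ t ∈ Finset.Iio (blk k), m t) ≤ (k:ℕ) := by
    intro k
    by_contra h
    push_neg at h
    have hpos : 0 < (blk k : ℕ) := by
      rcases Nat.eq_zero_or_pos (blk k : ℕ) with h0 | h0
      · have : Finset.Iio (blk k) = ∅ := by
          apply Finset.eq_empty_of_forall_notMem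
          intro t ht
          simp only [Finset.mem_Iio, Fin.lt_def] at ht
          omega
        rw [this] at h; simp at h
      · exact h0
    set s' : Fin r := ⟨(blk k : ℕ) - 1, by omega⟩ with hs'
    have hIic : Finset.Iic s' = Finset.Iio (blk k) := by
      ext t
      simp only [Finset.mem_Iic, Finset.mem_Iio, Fin.le_def, Fin.lt_def, hs', Fin.val_mk]
      omega
    have h2 : (k:ℕ) < Csum m s' := by rw [Csum, hIic]; exact h
    have h3 := hblk_min k s' h2
    rw [Fin.le_def] at h3
    simp only [hs', Fin.val_mk] at h3
    omega
  have hfiber : ∀ t : Fin r, (I.filter fun k => blk k = t).card ≤ m t := by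
    intro t
    have hmap : ∀ k ∈ I.filter fun k => blk k = t,
        (k:ℕ) ∈ Finset.Ico (∑ u ∈ Finset.Iio t, m u) (Csum m t) := by
      intro k hk
      obtain ⟨hkI, hkt⟩ := Finset.mem_filter.mp hk
      rw [Finset.mem_Ico]
      refine ⟨?_, ?_⟩
      · rw [← hkt]; exact hblk_b k
      · rw [← hkt]; exact hblk_lt k
    calc (I.filter fun k => blk k = t).card
        ≤ (Finset.Ico (∑ u ∈ Finset.Iio t, m u) (Csum m t)).card :=
          Finset.card_le_card_of_injOn (fun k => (k:ℕ)) hmap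
            (fun a _ b _ h => Fin.ext h)
      _ = m t := by rw [Nat.card_Ico, Bsum_add]; omega
  set F := I.image blk with hF
  have hcardF : (s₀:ℕ) + 1 ≤ F.card := by
    by_contra h
    push_neg at h
    have h1 : I.card = ∑ t ∈ F, (I.filter fun k => blk k = t).card :=
      Finset.card_eq_sum_card_fiberwise (fun k hk => Finset.mem_image_of_mem blk hk)
    have h2 : I.card ≤ ∑ t ∈ F, m t := by
      rw [h1]; exact Finset.sum_le_sum fun t _ => hfiber t
    have h3 := npYoung.sum_le_sum_Iio hm s₀ F (by omega)
    omega
  set T := I.filter (fun k => ∀ k' ∈ I, blk k' = blk k → k' ≤ k) with hT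
  have hTI : T ⊆ I := Finset.filter_subset _ _
  have hFT : F ⊆ T.image blk := by
    intro t ht
    obtain ⟨k, hkI, hkt⟩ := Finset.mem_image.mp ht
    have hne' : (I.filter fun k => blk k = t).Nonempty := ⟨k, Finset.mem_filter.mpr ⟨hkI, hkt⟩⟩
    set kst := (I.filter fun k => blk k = t).max' hne' with hkst
    have hkmem := Finset.max'_mem _ hne'
    obtain ⟨hkstI, hkstt⟩ := Finset.mem_filter.mp hkmem
    apply Finset.mem_image.mpr
    refine ⟨kst, ?_, hkstt⟩
    apply Finset.mem_filter.mpr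
    refine ⟨hkstI, ?_⟩
    intro k' hk' hblk'
    exact Finset.le_max' _ _ (Finset.mem_filter.mpr ⟨hk', by rw [hblk', hkstt]⟩)
  have hcardT : (s₀:ℕ) + 1 ≤ T.card :=
    le_trans hcardF (le_trans (Finset.card_le_card hFT) Finset.card_image_le)
  have hprop : ∀ k ∈ T, ¬ (((σ k : Fin d) : ℕ) = (k : ℕ) + 1 ∧
      ∀ s : Fin r, ((σ k : Fin d) : ℕ) ≠ ∑ t ∈ Finset.Iic s, m t) := by
    rintro k hk ⟨heq, hnb⟩
    obtain ⟨hkI, hkmax⟩ := Finset.mem_filter.mp hk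
    have hσkI := hσ k hkI
    have h1 : blk (σ k) ≤ blk k := by
      apply hblk_min
      have ha := hblk_lt k
      have hb := hnb (blk k)
      rw [Csum] at ha ⊢
      omega
    have h2 : blk k ≤ blk (σ k) := by
      apply hblk_min
      have := hblk_lt (σ k)
      omega
    have h3 := hkmax (σ k) hσkI (le_antisymm h1 h2)
    rw [Fin.le_def] at h3
    omega
  obtain ⟨T', hT'T, hT'card⟩ := Finset.exists_subset_card_eq hcardT
  exact ⟨T', hT'T.trans hTI, hT'card, fun k hk => hprop k (hT'T hk)⟩
end

lemma key_coeff_dvd {S : Type*} [CommRing S] (ℓ : S) {r d : ℕ} {m : Fin r → ℕ}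
    (hm : Antitone m) (hsum : ∑ i, m i = d)
    (y : Matrix (Fin d) (Fin d) S)
    (hy : ∀ i j, ℓ ∣ (y i j - jordanNilpotent r d m S i j))
    (s₀ : Fin r) (i : ℕ) (h1 : (∑ t ∈ Finset.Iio s₀, m t) < i)
    (h2 : i ≤ ∑ t ∈ Finset.Iic s₀, m t) :
    ℓ ^ ((s₀ : ℕ) + 1) ∣ (Matrix.charpoly y).coeff (d - i) := by
  classical
  have hid : i ≤ d := le_trans h2
    (by rw [← hsum]; exact Finset.sum_le_sum_of_subset (Finset.subset_univ _))
  rw [Matrix.charpoly, Matrix.det_apply', Polynomial.finset_sum_coeff]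
  apply Finset.dvd_sum
  intro σ _
  have hfac : ∀ k : Fin d, Matrix.charmatrix y (σ k) k
      = (if σ k = k then (Polynomial.X : Polynomial S) else 0)
        + Polynomial.C (-(y (σ k) k)) := by
    intro k
    by_cases h : σ k = k
    · rw [if_pos h, h, Matrix.charmatrix_apply_eq, map_neg, sub_eq_add_neg]
    · rw [if_neg h, Matrix.charmatrix_apply_ne _ _ _ h, map_neg, zero_add]
  rw [show (∏ k, Matrix.charmatrix y (σ k) k) = ∑ A ∈ (Finset.univ : Finset (Fin d)).powerset,
        (∏ k ∈ A, (if σ k = k then (Polynomial.X : Polynomial S) else 0)) *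
        ∏ k ∈ Finset.univ \ A, Polynomial.C (-(y (σ k) k)) by
      rw [← Finset.prod_add]; exact Finset.prod_congr rfl fun k _ => hfac k]
  rw [Finset.mul_sum, Polynomial.finset_sum_coeff]
  apply Finset.dvd_sum
  intro A hA
  by_cases hfix : ∀ k ∈ A, σ k = k
  swap
  · push_neg at hfix
    obtain ⟨k₀, hk₀A, hk₀⟩ := hfix
    have hz : (∏ k ∈ A, (if σ k = k then (Polynomial.X : Polynomial S) else 0)) = 0 :=
      Finset.prod_eq_zero hk₀A (if_neg hk₀)
    rw [hz, zero_mul, mul_zero, Polynomial.coeff_zero]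
    exact dvd_zero _
  rw [show (∏ k ∈ A, (if σ k = k then (Polynomial.X : Polynomial S) else 0))
        = Polynomial.X ^ A.card by
      rw [Finset.prod_congr rfl (fun k hk => if_pos (hfix k hk)), Finset.prod_const]]
  rw [show (∏ k ∈ Finset.univ \ A, Polynomial.C (-(y (σ k) k)))
        = Polynomial.C (∏ k ∈ Finset.univ \ A, (-(y (σ k) k))) from (map_prod (Polynomial.C : S →+* Polynomial S) _ _).symm]
  rw [Polynomial.coeff_intCast_mul]
  rw [mul_comm (Polynomial.X ^ A.card), Polynomial.coeff_C_mul, Polynomial.coeff_X_pow]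
  by_cases hcard : d - i = A.card
  swap
  · rw [if_neg hcard, mul_zero, mul_zero]
    exact dvd_zero _
  rw [if_pos hcard, mul_one]
  -- now show divisibility of the product
  set I := (Finset.univ : Finset (Fin d)) \ A with hIdef
  have hIcard : I.card = i := by
    rw [hIdef, Finset.card_sdiff_of_subset (Finset.subset_univ _), Finset.card_univ, Fintype.card_fin,
      ← hcard]
    omega
  have hσI : ∀ k ∈ I, σ k ∈ I := by
    intro k hk
    rw [hIdef, Finset.mem_sdiff] at hk ⊢
    refine ⟨Finset.mem_univ _, ?_⟩
    intro hmem
    have := hfix (σ k) hmem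
    have := σ.injective this
    exact hk.2 (this ▸ hmem)
  obtain ⟨T, hTI, hTcard, hTzero⟩ := exists_zero_entries hm hsum s₀ I (by omega) σ hσI
  have hdvd1 : ∀ k ∈ T, ℓ ∣ (-(y (σ k) k)) := by
    intro k hk
    have hz : jordanNilpotent r d m S (σ k) k = 0 := by
      rw [jordanNilpotent, Matrix.of_apply, if_neg (hTzero k hk)]
    have := hy (σ k) k
    rw [hz, sub_zero] at this
    exact this.neg_right
  have hdvd2 : ℓ ^ ((s₀:ℕ)+1) ∣ ∏ k ∈ T, (-(y (σ k) k)) := by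
    calc ℓ ^ ((s₀:ℕ)+1) = ∏ _k ∈ T, ℓ := by rw [Finset.prod_const, hTcard]
      _ ∣ ∏ k ∈ T, (-(y (σ k) k)) := Finset.prod_dvd_prod_of_dvd _ _ hdvd1
  have : (∏ k ∈ I, (-(y (σ k) k))) = (∏ k ∈ I \ T, (-(y (σ k) k))) * ∏ k ∈ T, (-(y (σ k) k)) :=
    (Finset.prod_sdiff hTI).symm
  rw [this]
  exact Dvd.dvd.mul_left (Dvd.dvd.mul_left hdvd2 _) _

lemma jordan_map {r d : ℕ} (m : Fin r → ℕ) {K K' : Type*} [CommRing K] [CommRing K']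
    (f : K →+* K') :
    (jordanNilpotent r d m K).map f = jordanNilpotent r d m K' := by
  ext a b
  simp only [jordanNilpotent, Matrix.map_apply, Matrix.of_apply]
  split_ifs
  · exact map_one f
  · exact map_zero f

lemma charpoly_units_conj' {R : Type*} [CommRing R] {n : Type*} [DecidableEq n] [Fintype n]
    (U : (Matrix n n R)ˣ) (x : Matrix n n R) :
    (((U⁻¹ : (Matrix n n R)ˣ) : Matrix n n R) * x * (U : Matrix n n R)).charpoly
      = x.charpoly := by
  classical
  set f : Matrix n n R →+* Matrix n n (Polynomial R) :=
    (Polynomial.C : R →+* Polynomial R).mapMatrix with hf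
  set U' := ((U⁻¹ : (Matrix n n R)ˣ) : Matrix n n R) with hU'
  have hUU : f U' * f (U : Matrix n n R) = 1 := by
    rw [← map_mul, hU', Units.inv_mul, map_one]
  have hsc : Matrix.charmatrix (U' * x * (U : Matrix n n R))
      = f U' * Matrix.charmatrix x * f (U : Matrix n n R) := by
    rw [Matrix.charmatrix, Matrix.charmatrix]
    have hcomm : ∀ M : Matrix n n (Polynomial R),
        Matrix.scalar n (Polynomial.X : Polynomial R) * M
          = M * Matrix.scalar n Polynomial.X := fun M =>
      (Matrix.scalar_commute _ (fun r' => Commute.all _ r') M).eq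
    have h1 : f U' * Matrix.scalar n (Polynomial.X : Polynomial R) * f (U : Matrix n n R)
        = Matrix.scalar n (Polynomial.X : Polynomial R) := by
      rw [← hcomm (f U'), mul_assoc, hUU, mul_one]
    rw [mul_sub, sub_mul, h1]
    congr 1
    rw [RingHom.mapMatrix_apply, RingHom.mapMatrix_apply, RingHom.mapMatrix_apply,
      RingHom.mapMatrix_apply, Matrix.map_mul, Matrix.map_mul]
  unfold Matrix.charpoly
  rw [hsc, Matrix.det_mul, Matrix.det_mul]
  have h2 : (f U').det * (f (U : Matrix n n R)).det = 1 := by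
    rw [← Matrix.det_mul, hUU, Matrix.det_one]
  calc (f U').det * (Matrix.charmatrix x).det * (f (U : Matrix n n R)).det
      = (f U').det * (f (U : Matrix n n R)).det * (Matrix.charmatrix x).det := by ring
    _ = (Matrix.charmatrix x).det := by rw [h2, one_mul]

/-- the Newton polygon of the characteristic polynomial of `x` lies on or
above the Young polygon of `x mod ℓ`: for every `s` (1-indexed: `(s : ℕ) + 1`) and every
`m₁ + ⋯ + m_{s-1} < i ≤ m₁ + ⋯ + m_s`, the coefficient `a_i` of `t^{d-i}` satisfies
`ν(a_i) ≥ s`. -/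
theorem newton_polygon_above_young_polygon
    (ℓ : ℕ) [Fact ℓ.Prime] {S : Type*} [CommRing S] [IsDomain S] [IsDiscreteValuationRing S]
    (hℓ : Irreducible (ℓ : S))
    (r d : ℕ) (m : Fin r → ℕ) (hm : Antitone m) (hm1 : ∀ i, 1 ≤ m i)
    (hsum : ∑ i, m i = d)
    (x : Matrix (Fin d) (Fin d) S)
    (P : Matrix.GeneralLinearGroup (Fin d) (S ⧸ Ideal.span {(ℓ : S)}))
    (hx : x.map (Ideal.Quotient.mk (Ideal.span {(ℓ : S)})) =
      (P : Matrix (Fin d) (Fin d) (S ⧸ Ideal.span {(ℓ : S)})) * jordanNilpotent r d m (S ⧸ Ideal.span {(ℓ : S)}) * ((P⁻¹ : Matrix.GeneralLinearGroup (Fin d) (S ⧸ Ideal.span {(ℓ : S)})) : Matrix (Fin d) (Fin d) (S ⧸ Ideal.span {(ℓ : S)}))) :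
    ∀ s : Fin r, ∀ i : ℕ,
      (∑ t ∈ Finset.Iio s, m t) < i → i ≤ ∑ t ∈ Finset.Iic s, m t →
      (ℓ : S) ^ ((s : ℕ) + 1) ∣ (Matrix.charpoly x).coeff (d - i) := by
  classical
  intro s i h1 h2
  -- lift P to an invertible matrix over S
  choose Qf hQf using fun (a b : Fin d) =>
    Ideal.Quotient.mk_surjective (I := Ideal.span {(ℓ : S)})
      ((P : Matrix (Fin d) (Fin d) (S ⧸ Ideal.span {(ℓ : S)})) a b)
  set Q : Matrix (Fin d) (Fin d) S := Matrix.of Qf with hQ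
  have hQmap : Q.map (Ideal.Quotient.mk (Ideal.span {(ℓ : S)}))
      = (P : Matrix (Fin d) (Fin d) (S ⧸ Ideal.span {(ℓ : S)})) := by
    ext a b; exact hQf a b
  have hItop : (Ideal.span {(ℓ : S)}) ≠ ⊤ := by
    rw [Ne, Ideal.span_singleton_eq_top]
    exact hℓ.not_isUnit
  haveI : Nontrivial (S ⧸ Ideal.span {(ℓ : S)}) := Ideal.Quotient.nontrivial_iff.mpr hItop
  have hdet : IsUnit Q.det := by
    by_contra hne
    have hmem : Q.det ∈ Ideal.span {(ℓ : S)} := by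
      rw [← hℓ.maximalIdeal_eq]
      exact hne
    have hz : Ideal.Quotient.mk (Ideal.span {(ℓ : S)}) Q.det = 0 :=
      Ideal.Quotient.eq_zero_iff_mem.mpr hmem
    have hPdet : IsUnit ((P : Matrix (Fin d) (Fin d) (S ⧸ Ideal.span {(ℓ : S)})).det) :=
      (Matrix.isUnit_iff_isUnit_det _).mp P.isUnit
    rw [← hQmap,
      show (Q.map (Ideal.Quotient.mk (Ideal.span {(ℓ : S)}))).det
          = Ideal.Quotient.mk (Ideal.span {(ℓ : S)}) Q.det by
        rw [RingHom.map_det, RingHom.mapMatrix_apply],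
      hz] at hPdet
    exact not_isUnit_zero hPdet
  obtain ⟨U, hU⟩ := (Matrix.isUnit_iff_isUnit_det Q).mpr hdet
  set y : Matrix (Fin d) (Fin d) S :=
    ((U⁻¹ : (Matrix (Fin d) (Fin d) S)ˣ) : Matrix (Fin d) (Fin d) S) * x
      * (U : Matrix (Fin d) (Fin d) S) with hy
  have hchar : y.charpoly = x.charpoly := charpoly_units_conj' U x
  have hUinvmap : ((U⁻¹ : (Matrix (Fin d) (Fin d) S)ˣ) : Matrix (Fin d) (Fin d) S).map
        (Ideal.Quotient.mk (Ideal.span {(ℓ : S)}))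
      = ((P⁻¹ : Matrix.GeneralLinearGroup (Fin d) (S ⧸ Ideal.span {(ℓ : S)}))
          : Matrix (Fin d) (Fin d) (S ⧸ Ideal.span {(ℓ : S)})) := by
    have h3 : ((U⁻¹ : (Matrix (Fin d) (Fin d) S)ˣ) : Matrix (Fin d) (Fin d) S).map
          (Ideal.Quotient.mk (Ideal.span {(ℓ : S)}))
        * (P : Matrix (Fin d) (Fin d) (S ⧸ Ideal.span {(ℓ : S)})) = 1 := by
      rw [← hQmap, ← hU, ← Matrix.map_mul, Units.inv_mul,
        Matrix.map_one _ (map_zero _) (map_one _)]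
    calc ((U⁻¹ : (Matrix (Fin d) (Fin d) S)ˣ) : Matrix (Fin d) (Fin d) S).map
          (Ideal.Quotient.mk (Ideal.span {(ℓ : S)}))
        = ((U⁻¹ : (Matrix (Fin d) (Fin d) S)ˣ) : Matrix (Fin d) (Fin d) S).map
            (Ideal.Quotient.mk (Ideal.span {(ℓ : S)}))
          * ((P : Matrix (Fin d) (Fin d) (S ⧸ Ideal.span {(ℓ : S)}))
            * ((P⁻¹ : Matrix.GeneralLinearGroup (Fin d) (S ⧸ Ideal.span {(ℓ : S)}))
              : Matrix (Fin d) (Fin d) (S ⧸ Ideal.span {(ℓ : S)}))) := by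
          rw [Units.mul_inv, mul_one]
      _ = _ := by rw [← mul_assoc, h3, one_mul]
  have hymap : y.map (Ideal.Quotient.mk (Ideal.span {(ℓ : S)}))
      = jordanNilpotent r d m (S ⧸ Ideal.span {(ℓ : S)}) := by
    rw [hy, Matrix.map_mul, Matrix.map_mul, hUinvmap, hx, hU, hQmap]
    simp only [← mul_assoc]
    rw [Units.inv_mul, one_mul, mul_assoc, Units.inv_mul, mul_one]
  have hy' : ∀ a b, (ℓ : S) ∣ (y a b - jordanNilpotent r d m S a b) := by
    intro a b
    have h4 : Ideal.Quotient.mk (Ideal.span {(ℓ : S)}) (y a b)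
        = Ideal.Quotient.mk (Ideal.span {(ℓ : S)}) (jordanNilpotent r d m S a b) := by
      have h5 := congrFun (congrFun hymap a) b
      have h6 := congrFun (congrFun (jordan_map (d := d) m
        (Ideal.Quotient.mk (Ideal.span {(ℓ : S)}))) a) b
      simp only [Matrix.map_apply] at h5 h6
      rw [h5, h6]
    exact Ideal.mem_span_singleton.mp (Ideal.Quotient.eq.mp h4)
  have := key_coeff_dvd (ℓ : S) hm hsum y hy' s i h1 h2
  rwa [hchar] at this
end

section
/- Let S be the ring of integers of a finite unramified extension of Q_ℓ, and let Q ∈ S[t] be monic of degree d with Q(t) ≡ t^d (mod ℓ). Let R = S[t]/(Q) and V = R ⊗ Q_ℓ, with x the image of t. If N is a nilpotent d×d matrix over S/ℓS whose Young polygon lies on or below the Newton polygon of Q, then there exists an R-invariant S-lattice T in V such that the reduction of x modulo ℓ on T/ℓT is conjugate to N. -/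
open scoped Classical

/-- The companion matrix of a monic polynomial `Q` of degree `d = Q.natDegree`. -/
noncomputable def companionMatrix {K : Type*} [CommRing K] (Q : Polynomial K) :
    Matrix (Fin Q.natDegree) (Fin Q.natDegree) K :=
  Matrix.of fun i j =>
    (if (i : ℕ) = (j : ℕ) + 1 then 1 else 0) +
      (if (j : ℕ) = Q.natDegree - 1 then -Q.coeff i else 0)

namespace YoungAux

def G (mm : ℕ → ℕ) (n : ℕ) : ℕ := ∑ t ∈ Finset.range n, mm t
def H (mm : ℕ → ℕ) (r n : ℕ) : ℕ := ∑ t ∈ Finset.range n, mm (r - 1 - t)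

lemma G_succ (mm : ℕ → ℕ) (n : ℕ) : G mm (n+1) = G mm n + mm n :=
  Finset.sum_range_succ _ _
lemma H_succ (mm : ℕ → ℕ) (r n : ℕ) : H mm r (n+1) = H mm r n + mm (r - 1 - n) :=
  Finset.sum_range_succ _ _
lemma G_mono (mm : ℕ → ℕ) {a b : ℕ} (hab : a ≤ b) : G mm a ≤ G mm b :=
  Finset.sum_le_sum_of_subset (Finset.range_subset_range.2 hab)

lemma G_strictMono {mm : ℕ → ℕ} {r : ℕ} (h1 : ∀ t < r, 1 ≤ mm t) {a b : ℕ}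
    (hab : a < b) (hb : b ≤ r) : G mm a < G mm b := by
  induction b with
  | zero => omega
  | succ n ih =>
    rw [G_succ]
    rcases Nat.lt_or_ge a n with h | h
    · have := ih h (by omega); have := h1 n (by omega); omega
    · have : a = n := by omega
      subst this
      have := h1 a (by omega); omega

lemma H_strictMono {mm : ℕ → ℕ} {r : ℕ} (h1 : ∀ t < r, 1 ≤ mm t) {a b : ℕ}
    (hab : a < b) (hb : b ≤ r) : H mm r a < H mm r b := by
  induction b with
  | zero => omega
  | succ n ih =>
    rw [H_succ]
    have hm : 1 ≤ mm (r - 1 - n) := h1 _ (by omega)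
    rcases Nat.lt_or_ge a n with h | h
    · have := ih h (by omega); omega
    · have : a = n := by omega
      subst this; omega

lemma GH (mm : ℕ → ℕ) (r : ℕ) : ∀ n ≤ r, H mm r n + G mm (r - n) = G mm r := by
  intro n
  induction n with
  | zero => intro _; simp [H, G]
  | succ n ih =>
    intro hn
    have h1 := ih (by omega)
    rw [H_succ]
    have h2 : r - n = (r - (n+1)) + 1 := by omega
    rw [h2, G_succ] at h1
    have h3 : r - 1 - n = r - (n+1) := by omega
    rw [h3]
    omega

def bI (f : ℕ → ℕ) (r a : ℕ) : ℕ := Nat.findGreatest (fun s => f s ≤ a) r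

lemma bI_spec {f : ℕ → ℕ} {r a : ℕ}
    (hsm : ∀ u v : ℕ, u < v → v ≤ r → f u < f v) (hf0 : f 0 = 0) (ha : a < f r) :
    f (bI f r a) ≤ a ∧ a < f (bI f r a + 1) ∧ bI f r a < r := by
  have hspec : f (bI f r a) ≤ a :=
    Nat.findGreatest_spec (P := fun s => f s ≤ a) (Nat.zero_le r) (by omega)
  have hler : bI f r a ≤ r := Nat.findGreatest_le r
  have hlt : bI f r a < r := by
    rcases Nat.lt_or_ge (bI f r a) r with h | h
    · exact h
    · exfalso; have : bI f r a = r := by omega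
      rw [this] at hspec; omega
  refine ⟨hspec, ?_, hlt⟩
  have hng : ¬ f (bI f r a + 1) ≤ a :=
    Nat.findGreatest_is_greatest (P := fun s => f s ≤ a) (Nat.lt_succ_self _) (by omega)
  omega

lemma bI_eq {f : ℕ → ℕ} {r a s : ℕ}
    (hsm : ∀ u v : ℕ, u < v → v ≤ r → f u < f v) (hs : s < r)
    (h1 : f s ≤ a) (h2 : a < f (s+1)) : bI f r a = s := by
  have hle : s ≤ bI f r a := Nat.le_findGreatest (by omega) h1
  have hb : bI f r a ≤ r := Nat.findGreatest_le r
  by_contra h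
  have hgt : s + 1 ≤ bI f r a := by omega
  have hspec : f (bI f r a) ≤ a :=
    Nat.findGreatest_spec (P := fun s => f s ≤ a) (show s ≤ r by omega) h1
  have : f (s+1) ≤ f (bI f r a) := by
    rcases eq_or_lt_of_le hgt with h' | h'
    · rw [h']
    · exact (hsm _ _ h' hb).le
  omega

/-! ### the block permutation -/

section Perm

variable (mm : ℕ → ℕ) (r : ℕ)

def eB (a : ℕ) : ℕ := bI (H mm r) r a
def sB (a : ℕ) : ℕ := bI (G mm) r a
def sigmaB (a : ℕ) : ℕ := (a - G mm (sB mm r a)) + (G mm r - G mm (sB mm r a + 1))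
def tauB (b : ℕ) : ℕ := (b - H mm r (eB mm r b)) + G mm (r - 1 - eB mm r b)

variable {mm r}
variable (h1 : ∀ t < r, 1 ≤ mm t)
include h1

lemma Hr_eq : H mm r r = G mm r := by
  have := GH mm r r le_rfl
  simp [G] at this ⊢
  omega

lemma e_spec {a : ℕ} (ha : a < G mm r) :
    H mm r (eB mm r a) ≤ a ∧ a < H mm r (eB mm r a + 1) ∧ eB mm r a < r := by
  apply bI_spec (fun u v h h' => H_strictMono h1 h h') (by simp [H]) (by rw [Hr_eq h1]; exact ha)

lemma s_spec {a : ℕ} (ha : a < G mm r) :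
    G mm (sB mm r a) ≤ a ∧ a < G mm (sB mm r a + 1) ∧ sB mm r a < r := by
  apply bI_spec (fun u v h h' => G_strictMono h1 h h') (by simp [G]) ha

-- H n = G r - G (r - n), convenient forms
lemma HG₁ {s : ℕ} (hs : s < r) : H mm r (r - 1 - s) + G mm (s + 1) = G mm r := by
  have := GH mm r (r - 1 - s) (by omega)
  rwa [show r - (r - 1 - s) = s + 1 by omega] at this

lemma HG₂ {s : ℕ} (hs : s ≤ r) : H mm r (r - s) + G mm s = G mm r := by
  have := GH mm r (r - s) (by omega)
  rwa [show r - (r - s) = s by omega] at this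

lemma e_sigma {a : ℕ} (ha : a < G mm r) :
    eB mm r (sigmaB mm r a) = r - 1 - sB mm r a ∧
      sigmaB mm r a < G mm r ∧ tauB mm r (sigmaB mm r a) = a := by
  obtain ⟨hs1, hs2, hs3⟩ := s_spec h1 ha
  set s := sB mm r a with hsdef
  have hG1 : G mm (s+1) ≤ G mm r := G_mono mm (by omega)
  have hlo : H mm r (r - 1 - s) + G mm (s+1) = G mm r := HG₁ h1 hs3
  have hhi : H mm r (r - s) + G mm s = G mm r := HG₂ h1 (by omega)
  have hσ : sigmaB mm r a = (a - G mm s) + (G mm r - G mm (s+1)) := rfl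
  have hσlo : H mm r (r - 1 - s) ≤ sigmaB mm r a := by omega
  have hσhi : sigmaB mm r a < H mm r (r - s) := by omega
  have he : eB mm r (sigmaB mm r a) = r - 1 - s := by
    apply bI_eq (fun u v h h' => H_strictMono h1 h h') (by omega) hσlo
    rwa [show r - 1 - s + 1 = r - s by omega]
  have hlt : sigmaB mm r a < G mm r := by
    have : H mm r (r - s) ≤ H mm r r := by
      rcases Nat.eq_or_lt_of_le (show r - s ≤ r by omega) with h | h
      · rw [h]
      · exact (H_strictMono h1 h le_rfl).le
    rw [Hr_eq h1] at this; omega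
  refine ⟨he, hlt, ?_⟩
  show (sigmaB mm r a - H mm r (eB mm r (sigmaB mm r a))) +
      G mm (r - 1 - eB mm r (sigmaB mm r a)) = a
  rw [he, show r - 1 - (r - 1 - s) = s by omega]
  omega

lemma s_tau {b : ℕ} (hb : b < G mm r) :
    sB mm r (tauB mm r b) = r - 1 - eB mm r b ∧
      tauB mm r b < G mm r ∧ sigmaB mm r (tauB mm r b) = b := by
  obtain ⟨he1, he2, he3⟩ := e_spec h1 hb
  set s' := eB mm r b with hsdef
  have hlo : H mm r (r - 1 - s') + G mm (s' + 1) = G mm r := HG₁ h1 he3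
  have hhi : H mm r (r - s') + G mm s' = G mm r := HG₂ h1 (by omega)
  have hstep : r - s' = (r - 1 - s') + 1 := by omega
  have hlo' : H mm r (s' + 1) + G mm (r - 1 - s') = G mm r := by
    have := GH mm r (s' + 1) (by omega)
    rwa [show r - (s' + 1) = r - 1 - s' by omega] at this
  have hhi' : H mm r s' + G mm (r - s') = G mm r := by
    have := GH mm r s' (by omega)
    exact this
  have hτ : tauB mm r b = (b - H mm r s') + G mm (r - 1 - s') := rfl
  have hτlo : G mm (r - 1 - s') ≤ tauB mm r b := by omega
  have hτhi : tauB mm r b < G mm (r - s') := by omega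
  have hs : sB mm r (tauB mm r b) = r - 1 - s' := by
    apply bI_eq (fun u v h h' => G_strictMono h1 h h') (by omega) hτlo
    rwa [← hstep]
  have hGrs : G mm (r - s') ≤ G mm r := G_mono mm (by omega)
  refine ⟨hs, by omega, ?_⟩
  show (tauB mm r b - G mm (sB mm r (tauB mm r b))) +
      (G mm r - G mm (sB mm r (tauB mm r b) + 1)) = b
  rw [hs, ← hstep]
  omega

lemma e_mono {a b : ℕ} (hab : a ≤ b) : eB mm r a ≤ eB mm r b :=
  Nat.findGreatest_mono (fun _ h => le_trans h hab) le_rfl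

lemma e_step {a : ℕ} (ha : a + 1 < G mm r) : eB mm r (a + 1) ≤ eB mm r a + 1 := by
  by_contra h
  push_neg at h
  obtain ⟨hk1, _, hk3⟩ := e_spec h1 ha
  obtain ⟨hj1, hj2, hj3⟩ := e_spec h1 (show a < G mm r by omega)
  have hgr : ¬ H mm r (eB mm r (a+1) - 1) ≤ a :=
    Nat.findGreatest_is_greatest (P := fun s => H mm r s ≤ a) (n := r)
      (show eB mm r a < eB mm r (a+1) - 1 by omega) (by omega)
  have : H mm r (eB mm r (a+1) - 1) < H mm r (eB mm r (a+1)) :=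
    H_strictMono h1 (by omega) (by omega)
  omega

lemma e_last (hr : 0 < r) (hd : 0 < G mm r) : eB mm r (G mm r - 1) = r - 1 := by
  have hHr : H mm r r = G mm r := Hr_eq h1
  have hlt : H mm r (r - 1) < H mm r r := H_strictMono h1 (by omega) le_rfl
  apply bI_eq (fun u v h h' => H_strictMono h1 h h') (by omega) (by omega)
  rw [show r - 1 + 1 = r by omega]
  omega

lemma key_iff {i j : ℕ} (hi : i < G mm r) (hj : j < G mm r) :
    (i = j + 1 ∧ eB mm r i = eB mm r j) ↔
      (tauB mm r i = tauB mm r j + 1 ∧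
        ∀ s : ℕ, s < r → tauB mm r i ≠ G mm (s + 1)) := by
  obtain ⟨hi1, hi2, hi3⟩ := e_spec h1 hi
  obtain ⟨hj1, hj2, hj3⟩ := e_spec h1 hj
  obtain ⟨hsi, hτi, hστi⟩ := s_tau h1 hi
  obtain ⟨hsj, hτj, hστj⟩ := s_tau h1 hj
  constructor
  · rintro ⟨hij, hee⟩
    set s' := eB mm r i with hs'
    have hτid : tauB mm r i = (i - H mm r s') + G mm (r - 1 - s') := rfl
    have hτjd : tauB mm r j = (j - H mm r (eB mm r j)) + G mm (r - 1 - eB mm r j) := rfl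
    rw [← hee] at hτjd hj1 hj2
    have hlo : H mm r (r - 1 - s') + G mm (s' + 1) = G mm r := HG₁ h1 hi3
    have hhi : H mm r (r - s') + G mm s' = G mm r := HG₂ h1 (by omega)
    have hstep : r - s' = (r - 1 - s') + 1 := by omega
    have hlo' : H mm r (s' + 1) + G mm (r - 1 - s') = G mm r := by
      have := GH mm r (s' + 1) (by omega)
      rwa [show r - (s' + 1) = r - 1 - s' by omega] at this
    have hhi' : H mm r s' + G mm (r - s') = G mm r := GH mm r s' (by omega)
    refine ⟨by omega, ?_⟩
    intro s hs hGs
    have hτlo : G mm (r - 1 - s') + 1 ≤ tauB mm r i := by omega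
    have hτhi : tauB mm r i < G mm (r - s') := by omega
    have c1 : r - 1 - s' < s + 1 := by
      by_contra hc
      have : G mm (s+1) ≤ G mm (r - 1 - s') := G_mono mm (by omega)
      omega
    have c2 : s + 1 < r - s' := by
      by_contra hc
      have : G mm (r - s') ≤ G mm (s+1) := G_mono mm (by omega)
      omega
    omega
  · rintro ⟨hτ, hB⟩
    set s' := eB mm r i with hs'
    have hτid : tauB mm r i = (i - H mm r s') + G mm (r - 1 - s') := rfl
    -- first: i > H s'
    have hgt : H mm r s' + 1 ≤ i := by
      rcases Nat.eq_or_lt_of_le hi1 with h | h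
      · exfalso
        have hτ0 : tauB mm r i = G mm (r - 1 - s') := by omega
        rcases Nat.lt_or_ge s' (r - 1) with hc | hc
        · exact hB (r - 2 - s') (by omega)
            (by rw [hτ0, show r - 2 - s' + 1 = r - 1 - s' by omega])
        · have : s' = r - 1 := by omega
          rw [this, show r - 1 - (r - 1) = 0 by omega] at hτ0
          simp [G] at hτ0
          omega
      · omega
    -- e (i-1) = s'
    have hei : eB mm r (i - 1) = s' :=
      bI_eq (fun u v h h' => H_strictMono h1 h h') (by omega) (by omega) (by omega)
    have hτpred : tauB mm r (i - 1) = tauB mm r j := by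
      show (i - 1 - H mm r (eB mm r (i-1))) + G mm (r - 1 - eB mm r (i-1)) = _
      rw [hei]
      omega
    have hji : j = i - 1 := by
      have h1' := (s_tau h1 (show i - 1 < G mm r by omega)).2.2
      rw [hτpred, hστj] at h1'
      omega
    subst hji
    refine ⟨by omega, by rw [hei]⟩

end Perm
end YoungAux


section MainProof

lemma youngPowHelper {F : Type*} [Field F] {u : F} (hu : u ≠ 0) {a b k : ℕ}
    (h : a + k = b + 1) (c : F) : u ^ a * -(u ^ k * c) * (u ^ b)⁻¹ = -(u * c) := by
  rw [mul_neg, neg_mul, neg_inj, inv_eq_one_div, mul_one_div,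
    div_eq_iff (pow_ne_zero _ hu), show u * c * u ^ b = u ^ (b + 1) * c by ring, ← h, pow_add]
  ring

/-- if the Young polygon of the nilpotent matrix with Jordan data `m`
lies on or below the Newton polygon of `Q` (expressed by the divisibility condition
`ℓ^{s+1} ∣ a_i` for `m₁+⋯+m_s < i ≤ m₁+⋯+m_{s+1}`), then there is an `R`-invariant
`S`-lattice `T` in `V = R ⊗ Q_ℓ`: equivalently a matrix `M` over `S` (the action of `x`
on `T` in an `S`-basis) which is conjugate over the fraction field to the action of `x`
on `V` (the companion matrix of `Q`), and whose reduction mod `ℓ` is conjugate to the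
given nilpotent Jordan matrix. -/
theorem exists_lattice_with_given_young_polygon
    (ℓ : ℕ) [Fact ℓ.Prime] {S : Type*} [CommRing S] [IsDomain S] [IsDiscreteValuationRing S]
    (hℓ : Irreducible (ℓ : S))
    (Q : Polynomial S) (hQm : Q.Monic)
    (hQred : ∀ i < Q.natDegree, (ℓ : S) ∣ Q.coeff i)
    (r : ℕ) (m : Fin r → ℕ) (hm : Antitone m) (hm1 : ∀ i, 1 ≤ m i)
    (hsum : ∑ i, m i = Q.natDegree)
    (hNP : ∀ s : Fin r, ∀ i : ℕ,
      (∑ t ∈ Finset.Iio s, m t) < i → i ≤ ∑ t ∈ Finset.Iic s, m t →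
      (ℓ : S) ^ ((s : ℕ) + 1) ∣ Q.coeff (Q.natDegree - i)) :
    ∃ M : Matrix (Fin Q.natDegree) (Fin Q.natDegree) S,
      (∃ P : Matrix.GeneralLinearGroup (Fin Q.natDegree) (FractionRing S),
        M.map (algebraMap S (FractionRing S)) =
          (P : Matrix (Fin Q.natDegree) (Fin Q.natDegree) (FractionRing S)) *
            (companionMatrix Q).map (algebraMap S (FractionRing S)) *
            ((P⁻¹ : Matrix.GeneralLinearGroup (Fin Q.natDegree) (FractionRing S)) :
              Matrix (Fin Q.natDegree) (Fin Q.natDegree) (FractionRing S))) ∧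
      (∃ P₀ : Matrix.GeneralLinearGroup (Fin Q.natDegree) (S ⧸ Ideal.span {(ℓ : S)}),
        M.map (Ideal.Quotient.mk (Ideal.span {(ℓ : S)})) =
          (P₀ : Matrix (Fin Q.natDegree) (Fin Q.natDegree) (S ⧸ Ideal.span {(ℓ : S)})) *
            jordanNilpotent r Q.natDegree m (S ⧸ Ideal.span {(ℓ : S)}) *
            ((P₀⁻¹ : Matrix.GeneralLinearGroup (Fin Q.natDegree) (S ⧸ Ideal.span {(ℓ : S)})) :
              Matrix (Fin Q.natDegree) (Fin Q.natDegree) (S ⧸ Ideal.span {(ℓ : S)}))) := by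
  classical
  rcases Nat.eq_zero_or_pos Q.natDegree with hd0 | hdpos
  · refine ⟨0, ⟨1, ?_⟩, ⟨1, ?_⟩⟩ <;>
    · ext i j
      exact absurd i.isLt (by omega)
  have hr0 : 0 < r := by
    rcases Nat.eq_zero_or_pos r with h | h
    · exfalso; subst h; simp at hsum; omega
    · exact h
  set mm : ℕ → ℕ := fun t => if h : t < r then m ⟨t, h⟩ else 1 with hmmdef
  have h1 : ∀ t < r, 1 ≤ mm t := by
    intro t ht
    simp only [hmmdef, dif_pos ht]
    exact hm1 _
  have hGr : YoungAux.G mm r = Q.natDegree := by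
    rw [← hsum, YoungAux.G, ← Fin.sum_univ_eq_sum_range (fun t => mm t) r]
    apply Finset.sum_congr rfl
    intro i _
    simp [hmmdef, i.isLt]
  have hIic : ∀ s : Fin r, (∑ t ∈ Finset.Iic s, m t) = YoungAux.G mm ((s : ℕ) + 1) := by
    intro s
    rw [YoungAux.G,
      show Finset.range ((s : ℕ) + 1) = Finset.Iic (s : ℕ) from by ext x; simp [Nat.lt_succ_iff],
      ← Fin.map_valEmbedding_Iic, Finset.sum_map]
    apply Finset.sum_congr rfl
    intro i _
    simp [hmmdef, i.isLt]
  have hIio : ∀ s : Fin r, (∑ t ∈ Finset.Iio s, m t) = YoungAux.G mm (s : ℕ) := by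
    intro s
    rw [YoungAux.G,
      show Finset.range (s : ℕ) = Finset.Iio (s : ℕ) from by ext x; simp,
      ← Fin.map_valEmbedding_Iio, Finset.sum_map]
    apply Finset.sum_congr rfl
    intro i _
    simp [hmmdef, i.isLt]
  -- notation
  have hiG : ∀ i : Fin Q.natDegree, (i : ℕ) < YoungAux.G mm r := by
    intro i; rw [hGr]; exact i.isLt
  -- divisibility of coefficients
  have hdvd : ∀ i : Fin Q.natDegree,
      ∃ c, Q.coeff i = (ℓ : S) ^ (r - YoungAux.eB mm r i) * c := by
    intro i
    obtain ⟨he1, he2, he3⟩ := YoungAux.e_spec h1 (hiG i)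
    have hlo' : YoungAux.H mm r (YoungAux.eB mm r i + 1) +
        YoungAux.G mm (r - 1 - YoungAux.eB mm r i) = YoungAux.G mm r := by
      have := YoungAux.GH mm r (YoungAux.eB mm r i + 1) (by omega)
      rwa [show r - (YoungAux.eB mm r i + 1) = r - 1 - YoungAux.eB mm r i by omega] at this
    have hhi' : YoungAux.H mm r (YoungAux.eB mm r i) +
        YoungAux.G mm (r - YoungAux.eB mm r i) = YoungAux.G mm r :=
      YoungAux.GH mm r (YoungAux.eB mm r i) (by omega)
    have hHle : YoungAux.H mm r (YoungAux.eB mm r i + 1) ≤ YoungAux.G mm r := by omega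
    have hNPa := hNP ⟨r - 1 - YoungAux.eB mm r i, by omega⟩ (Q.natDegree - i) ?_ ?_
    · rw [show Q.natDegree - (Q.natDegree - (i : ℕ)) = (i : ℕ) from by
        have := i.isLt; omega] at hNPa
      obtain ⟨c, hc⟩ := hNPa
      refine ⟨c, ?_⟩
      rw [hc]
      congr 2
      show r - 1 - YoungAux.eB mm r ↑i + 1 = r - YoungAux.eB mm r ↑i
      omega
    · rw [hIio]
      show YoungAux.G mm (r - 1 - YoungAux.eB mm r i) < Q.natDegree - (i : ℕ)
      omega
    · rw [hIic]
      show Q.natDegree - (i : ℕ) ≤ YoungAux.G mm (r - 1 - YoungAux.eB mm r i + 1)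
      rw [show r - 1 - YoungAux.eB mm r i + 1 = r - YoungAux.eB mm r i by omega]
      omega
  choose cc hcc using hdvd
  set M : Matrix (Fin Q.natDegree) (Fin Q.natDegree) S := Matrix.of fun i j =>
    (if (i : ℕ) = (j : ℕ) + 1
      then (ℓ : S) ^ (YoungAux.eB mm r i - YoungAux.eB mm r j) else 0) +
    (if (j : ℕ) = Q.natDegree - 1 then -((ℓ : S) * cc i) else 0) with hM
  have helast : YoungAux.eB mm r (Q.natDegree - 1) = r - 1 := by
    have := YoungAux.e_last h1 hr0 (by rw [hGr]; exact hdpos)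
    rwa [hGr] at this
  -- Part 1 : conjugate to companion matrix over the fraction field
  have hφinj := IsFractionRing.injective S (FractionRing S)
  set φ := algebraMap S (FractionRing S) with hφ
  set u : FractionRing S := φ (ℓ : S) with hu
  have hune : u ≠ 0 := by
    rw [hu, Ne, map_eq_zero_iff φ hφinj]
    exact hℓ.ne_zero
  have part1 : ∃ P : Matrix.GeneralLinearGroup (Fin Q.natDegree) (FractionRing S),
      M.map φ = (P : Matrix (Fin Q.natDegree) (Fin Q.natDegree) (FractionRing S)) *
        (companionMatrix Q).map φ *
        ((P⁻¹ : Matrix.GeneralLinearGroup (Fin Q.natDegree) (FractionRing S)) :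
          Matrix (Fin Q.natDegree) (Fin Q.natDegree) (FractionRing S)) := by
    refine ⟨⟨Matrix.diagonal fun i => u ^ YoungAux.eB mm r i,
        Matrix.diagonal fun i => (u ^ YoungAux.eB mm r i)⁻¹, ?_, ?_⟩, ?_⟩
    · rw [Matrix.diagonal_mul_diagonal]
      have hfe : (fun i : Fin Q.natDegree =>
          u ^ YoungAux.eB mm r (i : ℕ) * (u ^ YoungAux.eB mm r (i : ℕ))⁻¹)
          = fun _ => (1 : FractionRing S) := by
        funext i
        exact mul_inv_cancel₀ (pow_ne_zero _ hune)
      rw [hfe, Matrix.diagonal_one]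
    · rw [Matrix.diagonal_mul_diagonal]
      have hfe : (fun i : Fin Q.natDegree =>
          (u ^ YoungAux.eB mm r (i : ℕ))⁻¹ * u ^ YoungAux.eB mm r (i : ℕ))
          = fun _ => (1 : FractionRing S) := by
        funext i
        exact inv_mul_cancel₀ (pow_ne_zero _ hune)
      rw [hfe, Matrix.diagonal_one]
    · show M.map φ = Matrix.diagonal _ * (companionMatrix Q).map φ * Matrix.diagonal _
      ext i j
      rw [Matrix.mul_diagonal, Matrix.diagonal_mul, Matrix.map_apply, Matrix.map_apply]
      simp only [hM, companionMatrix, Matrix.of_apply]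
      by_cases hc1 : (i : ℕ) = (j : ℕ) + 1 <;> by_cases hc2 : (j : ℕ) = Q.natDegree - 1
      · exfalso
        have h3 := i.isLt
        have h4 := j.isLt
        omega
      · rw [if_pos hc1, if_pos hc1, if_neg hc2, if_neg hc2, add_zero, add_zero, map_one,
          mul_one, map_pow]
        have hee : YoungAux.eB mm r j ≤ YoungAux.eB mm r i :=
          YoungAux.e_mono h1 (by omega)
        rw [pow_sub₀ u hune hee]
      · rw [if_neg hc1, if_neg hc1, if_pos hc2, if_pos hc2, zero_add, zero_add, map_neg,
          map_neg, map_mul, hcc i, map_mul, map_pow]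
        have hej : YoungAux.eB mm r (j : ℕ) = r - 1 := by rw [hc2]; exact helast
        rw [hej]
        obtain ⟨_, _, he3⟩ := YoungAux.e_spec h1 (hiG i)
        exact (youngPowHelper hune (by omega) (φ (cc i))).symm
      · rw [if_neg hc1, if_neg hc1, if_neg hc2, if_neg hc2]
        simp
  -- Part 2 : reduction mod ℓ
  set K := S ⧸ Ideal.span {(ℓ : S)} with hK
  set ψ := Ideal.Quotient.mk (Ideal.span {(ℓ : S)}) with hψ
  have hψℓ : ψ (ℓ : S) = 0 :=
    Ideal.Quotient.eq_zero_iff_mem.2 (Ideal.mem_span_singleton_self _)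
  have hσlt : ∀ a : Fin Q.natDegree, YoungAux.sigmaB mm r a < Q.natDegree := by
    intro a
    have := (YoungAux.e_sigma h1 (hiG a)).2.1
    rwa [hGr] at this
  have hτlt : ∀ b : Fin Q.natDegree, YoungAux.tauB mm r b < Q.natDegree := by
    intro b
    have := (YoungAux.s_tau h1 (hiG b)).2.1
    rwa [hGr] at this
  set σf : Fin Q.natDegree → Fin Q.natDegree :=
    fun a => ⟨YoungAux.sigmaB mm r a, hσlt a⟩ with hσf
  set τf : Fin Q.natDegree → Fin Q.natDegree :=
    fun b => ⟨YoungAux.tauB mm r b, hτlt b⟩ with hτf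
  have hτσ : ∀ a, τf (σf a) = a := by
    intro a
    apply Fin.ext
    exact (YoungAux.e_sigma h1 (hiG a)).2.2
  have hστ : ∀ b, σf (τf b) = b := by
    intro b
    apply Fin.ext
    exact (YoungAux.s_tau h1 (hiG b)).2.2
  set Pm : Matrix (Fin Q.natDegree) (Fin Q.natDegree) K :=
    Matrix.of fun i j => if i = σf j then 1 else 0 with hPm
  set Qm : Matrix (Fin Q.natDegree) (Fin Q.natDegree) K :=
    Matrix.of fun i j => if σf i = j then 1 else 0 with hQm2
  have hPQ : Pm * Qm = 1 := by
    ext i j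
    rw [Matrix.mul_apply, Matrix.one_apply]
    have hterm : ∀ k, Pm i k * Qm k j
        = if τf i = k then (if i = j then (1 : K) else 0) else 0 := by
      intro k
      simp only [hPm, hQm2, Matrix.of_apply]
      rcases eq_or_ne (τf i) k with h | h
      · subst h
        rw [if_pos (hστ i).symm, if_pos rfl, one_mul, hστ i]
      · rw [if_neg h, if_neg (fun hik : i = σf k => h (by rw [hik, hτσ]))]
        exact zero_mul _
    rw [Finset.sum_congr rfl (fun k _ => hterm k), Finset.sum_ite_eq]
    simp
  have hQP : Qm * Pm = 1 := by
    ext i j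
    rw [Matrix.mul_apply, Matrix.one_apply]
    have hterm : ∀ k, Qm i k * Pm k j
        = if σf i = k then (if i = j then (1 : K) else 0) else 0 := by
      intro k
      simp only [hPm, hQm2, Matrix.of_apply]
      rcases eq_or_ne (σf i) k with h | h
      · subst h
        rw [if_pos rfl, if_pos rfl, one_mul]
        rcases eq_or_ne i j with hij | hij
        · subst hij
          rw [if_pos rfl, if_pos rfl]
        · have hne : σf i ≠ σf j := fun hss => hij (by
            have := congrArg τf hss
            rwa [hτσ, hτσ] at this)
          rw [if_neg hij, if_neg hne]
      · simp only [if_neg h]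
        exact zero_mul _
    rw [Finset.sum_congr rfl (fun k _ => hterm k), Finset.sum_ite_eq]
    simp
  have part2 : ∃ P₀ : Matrix.GeneralLinearGroup (Fin Q.natDegree) K,
      M.map ψ = (P₀ : Matrix (Fin Q.natDegree) (Fin Q.natDegree) K) *
        jordanNilpotent r Q.natDegree m K *
        ((P₀⁻¹ : Matrix.GeneralLinearGroup (Fin Q.natDegree) K) :
          Matrix (Fin Q.natDegree) (Fin Q.natDegree) K) := by
    refine ⟨⟨Pm, Qm, hPQ, hQP⟩, ?_⟩
    show M.map ψ = Pm * jordanNilpotent r Q.natDegree m K * Qm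
    have hJQ : ∀ (a : Fin Q.natDegree) (j : Fin Q.natDegree),
        (jordanNilpotent r Q.natDegree m K * Qm) a j
          = jordanNilpotent r Q.natDegree m K a (τf j) := by
      intro a j
      rw [Matrix.mul_apply]
      have hterm : ∀ k, jordanNilpotent r Q.natDegree m K a k * Qm k j
          = if τf j = k then jordanNilpotent r Q.natDegree m K a k else 0 := by
        intro k
        simp only [hQm2, Matrix.of_apply]
        rcases eq_or_ne (τf j) k with h | h
        · subst h
          rw [if_pos (hστ j), if_pos rfl, mul_one]
        · rw [if_neg h, if_neg (fun hkj : σf k = j => h (by rw [← hkj, hτσ]))]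
          exact mul_zero _
      rw [Finset.sum_congr rfl (fun k _ => hterm k), Finset.sum_ite_eq]
      simp
    have hPX : ∀ (X : Matrix (Fin Q.natDegree) (Fin Q.natDegree) K)
        (i : Fin Q.natDegree) (b : Fin Q.natDegree),
        (Pm * X) i b = X (τf i) b := by
      intro X i b
      rw [Matrix.mul_apply]
      have hterm : ∀ k, Pm i k * X k b = if τf i = k then X k b else 0 := by
        intro k
        simp only [hPm, Matrix.of_apply]
        rcases eq_or_ne (τf i) k with h | h
        · subst h
          rw [if_pos (hστ i).symm, one_mul, if_pos rfl]
        · rw [if_neg h, if_neg (fun hik : i = σf k => h (by rw [hik, hτσ]))]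
          exact zero_mul _
      rw [Finset.sum_congr rfl (fun k _ => hterm k), Finset.sum_ite_eq]
      simp
    ext i j
    rw [mul_assoc, hPX, hJQ, Matrix.map_apply]
    -- now an entrywise identity
    have hkey := YoungAux.key_iff h1 (hiG i) (hiG j)
    have hcond2 : (∀ s : Fin r, (YoungAux.tauB mm r i : ℕ) ≠ ∑ t ∈ Finset.Iic s, m t)
        ↔ (∀ s : ℕ, s < r → YoungAux.tauB mm r i ≠ YoungAux.G mm (s + 1)) := by
      constructor
      · intro h s hs
        have := h ⟨s, hs⟩
        rwa [hIic] at this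
      · intro h s
        rw [hIic]
        exact h s s.isLt
    have hLHSJ : jordanNilpotent r Q.natDegree m K (τf i) (τf j)
        = if ((i : ℕ) = (j : ℕ) + 1 ∧ YoungAux.eB mm r i = YoungAux.eB mm r j)
          then 1 else 0 := by
      simp only [jordanNilpotent, Matrix.of_apply]
      by_cases hY : (i : ℕ) = (j : ℕ) + 1 ∧ YoungAux.eB mm r i = YoungAux.eB mm r j
      · rw [if_pos hY]
        obtain ⟨ha, hb⟩ := hkey.1 hY
        rw [if_pos ⟨ha, hcond2.2 hb⟩]
      · rw [if_neg hY, if_neg]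
        intro hcon
        exact hY (hkey.2 ⟨hcon.1, hcond2.1 hcon.2⟩)
    rw [hLHSJ]
    simp only [hM, Matrix.of_apply, map_add]
    have h2nd : ψ (if (j : ℕ) = Q.natDegree - 1 then -((ℓ : S) * cc i) else 0) = 0 := by
      split
      · rw [map_neg, map_mul, hψℓ, zero_mul, neg_zero]
      · exact map_zero _
    rw [h2nd, add_zero]
    by_cases hc1 : (i : ℕ) = (j : ℕ) + 1
    · rw [if_pos hc1]
      by_cases hc2 : YoungAux.eB mm r i = YoungAux.eB mm r j
      · rw [if_pos ⟨hc1, hc2⟩, hc2, Nat.sub_self, pow_zero, map_one]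
      · rw [if_neg (fun hcon => hc2 hcon.2)]
        have hee : YoungAux.eB mm r j ≤ YoungAux.eB mm r i :=
          YoungAux.e_mono h1 (by omega)
        have hstep : YoungAux.eB mm r ((j : ℕ) + 1) ≤ YoungAux.eB mm r j + 1 :=
          YoungAux.e_step h1 (by rw [← hc1]; exact hiG i)
        rw [← hc1] at hstep
        have : YoungAux.eB mm r i - YoungAux.eB mm r j = 1 := by omega
        rw [this, pow_one, hψℓ]
    · rw [if_neg hc1, if_neg (fun hcon => hc1 hcon.1), map_zero]
  obtain ⟨P, hP⟩ := part1
  obtain ⟨P₀, hP₀⟩ := part2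
  exact ⟨M, ⟨P, hP⟩, ⟨P₀, hP₀⟩⟩
end MainProof
end

section
/- Let S be a complete local ring with maximal ideal 𝔭, and let P₁,…,P_n, h₁,…,h_n ∈ S[t] be monic polynomials such that P_i ≡ h_i^{d_i} (mod 𝔭) and the h_i are pairwise coprime modulo 𝔭. Then S[t]/(∏_i P_i) ≅ ∏_i S[t]/(P_i) as S-algebras. -/
open Polynomial IsLocalRing

/-- If `f` is monic over a local ring and the reductions of `f, g` mod the maximal
ideal are coprime, then `f` and `g` are coprime (by Nakayama). -/
lemma isCoprime_of_isCoprime_map_maximalIdeal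
    {S : Type*} [CommRing S] [IsLocalRing S] {f g : Polynomial S} (hf : f.Monic)
    (hc : IsCoprime (f.map (Ideal.Quotient.mk (maximalIdeal S)))
      (g.map (Ideal.Quotient.mk (maximalIdeal S)))) : IsCoprime f g := by
  classical
  set 𝔭 := maximalIdeal S
  obtain ⟨a, b, hab⟩ := hc
  obtain ⟨A, hA⟩ := Polynomial.map_surjective _ Ideal.Quotient.mk_surjective a
  obtain ⟨B, hB⟩ := Polynomial.map_surjective _ Ideal.Quotient.mk_surjective b
  set r : Polynomial S := 1 - A * f - B * g with hr_def
  have hrmap : r.map (Ideal.Quotient.mk 𝔭) = 0 := by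
    simp only [hr_def, Polynomial.map_sub, Polynomial.map_mul, Polynomial.map_one, hA, hB]
    rw [sub_sub, hab, sub_self]
  have hrcoeff : ∀ k, r.coeff k ∈ 𝔭 := by
    intro k
    have := congrArg (fun p => Polynomial.coeff p k) hrmap
    simpa only [Polynomial.coeff_map, Polynomial.coeff_zero,
      Ideal.Quotient.eq_zero_iff_mem] using this
  -- work in T = S[X]/(f), a finite free S-module
  let T := AdjoinRoot f
  have : Module.Finite S T := Module.Finite.of_basis (AdjoinRoot.powerBasis' hf).basis
  set N : Submodule S T :=
    Submodule.restrictScalars S (Ideal.span {AdjoinRoot.mk f g}) with hN_def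
  have hrT : (AdjoinRoot.mk f r) ∈ (𝔭 • ⊤ : Submodule S T) := by
    rw [Ideal.smul_top_eq_map]
    rw [show (AdjoinRoot.mk f r) = AdjoinRoot.mk f
        (∑ k ∈ r.support, Polynomial.C (r.coeff k) * Polynomial.X ^ k) by
      congr 1
      conv_lhs => rw [Polynomial.as_sum_support r]
      exact Finset.sum_congr rfl fun k _ => (Polynomial.C_mul_X_pow_eq_monomial).symm]
    rw [map_sum]
    refine Submodule.sum_mem _ fun k _ => ?_
    rw [map_mul]
    refine Ideal.mul_mem_right _ _ ?_
    have : (AdjoinRoot.mk f) (Polynomial.C (r.coeff k)) = algebraMap S T (r.coeff k) := rfl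
    rw [this]
    exact Ideal.mem_map_of_mem _ (hrcoeff k)
  have key : (⊤ : Submodule S T) ≤ N ⊔ 𝔭 • ⊤ := by
    intro x _
    have h1 : (1 : T) = AdjoinRoot.mk f (B * g) + AdjoinRoot.mk f r
        + AdjoinRoot.mk f (A * f) := by
      rw [← map_add, ← map_add, show B * g + r + A * f = 1 by rw [hr_def]; ring, map_one]
    have hAf : AdjoinRoot.mk f (A * f) = 0 := by
      rw [AdjoinRoot.mk_eq_zero]
      exact Dvd.intro_left A rfl
    have hx : x = x * AdjoinRoot.mk f (B * g) + x * AdjoinRoot.mk f r := by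
      conv_lhs => rw [← mul_one x, h1]
      rw [hAf, add_zero, mul_add]
    rw [hx]
    refine Submodule.add_mem _ (Submodule.mem_sup_left ?_) (Submodule.mem_sup_right ?_)
    · show x * AdjoinRoot.mk f (B * g) ∈ Ideal.span {AdjoinRoot.mk f g}
      rw [map_mul]
      exact Ideal.mul_mem_left _ _ (Ideal.mul_mem_left _ _ (Ideal.subset_span rfl))
    · rw [Ideal.smul_top_eq_map] at hrT ⊢
      exact Ideal.mul_mem_left _ _ hrT
  have hjac : 𝔭 ≤ Ideal.jacobson (⊥ : Ideal S) :=
    (IsLocalRing.jacobson_eq_maximalIdeal (⊥ : Ideal S) bot_ne_top).ge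
  have := Submodule.sup_eq_sup_smul_of_le_smul_of_le_jacobson
    (N := N) (N' := (⊤ : Submodule S T)) (Module.finite_def.mp ‹Module.Finite S T›)
    hjac key
  rw [Submodule.bot_smul, sup_bot_eq, sup_top_eq] at this
  -- so N = ⊤, i.e. span {mk f g} = ⊤
  have hspan : Ideal.span {AdjoinRoot.mk f g} = ⊤ := by
    rw [Ideal.eq_top_iff_one]
    have : (1 : T) ∈ N := this ▸ Submodule.mem_top
    exact this
  obtain ⟨c, hc1⟩ := Ideal.mem_span_singleton'.mp ((Ideal.eq_top_iff_one _).mp hspan)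
  obtain ⟨C, rfl⟩ := AdjoinRoot.mk_surjective c
  have : AdjoinRoot.mk f (C * g - 1) = 0 := by
    rw [map_sub, map_mul, hc1, map_one, sub_self]
  obtain ⟨D, hD⟩ := AdjoinRoot.mk_eq_zero.mp this
  refine ⟨-D, C, ?_⟩
  have : C * g - 1 = f * D := hD
  linear_combination this

/-- Chinese remainder theorem for a complete local ring `S`:
if `P i ≡ (h i)^(d i)` modulo the maximal ideal and the `h i` are pairwise coprime
modulo the maximal ideal, then `S[t]/(∏ P i) ≅ ∏ S[t]/(P i)` as `S`-algebras. -/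
theorem crt_complete_local_ring
    {S : Type*} [CommRing S] [IsLocalRing S]
    [IsAdicComplete (IsLocalRing.maximalIdeal S) S]
    (n : ℕ) (P h : Fin n → Polynomial S) (d : Fin n → ℕ)
    (hPm : ∀ i, (P i).Monic) (hhm : ∀ i, (h i).Monic)
    (hred : ∀ i, (P i).map (Ideal.Quotient.mk (IsLocalRing.maximalIdeal S)) =
      ((h i).map (Ideal.Quotient.mk (IsLocalRing.maximalIdeal S))) ^ d i)
    (hcop : ∀ i j, i ≠ j →
      IsCoprime ((h i).map (Ideal.Quotient.mk (IsLocalRing.maximalIdeal S)))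
        ((h j).map (Ideal.Quotient.mk (IsLocalRing.maximalIdeal S)))) :
    Nonempty ((Polynomial S ⧸ Ideal.span {∏ i, P i}) ≃ₐ[S]
      ∀ i, Polynomial S ⧸ Ideal.span ({P i} : Set (Polynomial S))) := by
  have hPcop : ∀ i j, i ≠ j → IsCoprime (P i) (P j) := fun i j hij =>
    isCoprime_of_isCoprime_map_maximalIdeal (hPm i)
      (by rw [hred i, hred j]; exact ((hcop i j hij).pow))
  have hpair : Pairwise (Function.onFun IsCoprime fun i => Ideal.span ({P i} : Set (Polynomial S))) :=
    fun i j hij => (Ideal.isCoprime_span_singleton_iff _ _).mpr (hPcop i j hij)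
  have hinf : (⨅ i, Ideal.span ({P i} : Set (Polynomial S))) = Ideal.span {∏ i, P i} :=
    Ideal.iInf_span_singleton hPcop
  let e₁ : (Polynomial S ⧸ Ideal.span {∏ i, P i}) ≃+*
      (Polynomial S ⧸ ⨅ i, Ideal.span ({P i} : Set (Polynomial S))) :=
    Ideal.quotEquivOfEq hinf.symm
  let e₂ := Ideal.quotientInfRingEquivPiQuotient
    (fun i => Ideal.span ({P i} : Set (Polynomial S))) hpair
  refine ⟨AlgEquiv.ofRingEquiv (f := e₁.trans e₂) fun r => ?_⟩
  rfl
end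

section
/- Let S be a complete local ring with maximal ideal 𝔭 and let P_i, P_j ∈ S[t] be monic polynomials whose reductions modulo 𝔭 are powers of coprime polynomials h_i, h_j. Then the ideals (P_i) and (P_j) are comaximal in S[t]: (P_i) + (P_j) = S[t]. -/
/-- over a complete local ring `S`, monic polynomials whose reductions
modulo the maximal ideal are powers of coprime polynomials generate comaximal ideals
in `S[t]`. -/
theorem comaximal_of_coprime_mod_maximalIdeal
    {S : Type*} [CommRing S] [IsLocalRing S]
    [IsAdicComplete (IsLocalRing.maximalIdeal S) S]
    (P₁ P₂ h₁ h₂ : Polynomial S) (d₁ d₂ : ℕ)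
    (hP₁ : P₁.Monic) (hP₂ : P₂.Monic)
    (hred₁ : P₁.map (Ideal.Quotient.mk (IsLocalRing.maximalIdeal S)) =
      (h₁.map (Ideal.Quotient.mk (IsLocalRing.maximalIdeal S))) ^ d₁)
    (hred₂ : P₂.map (Ideal.Quotient.mk (IsLocalRing.maximalIdeal S)) =
      (h₂.map (Ideal.Quotient.mk (IsLocalRing.maximalIdeal S))) ^ d₂)
    (hcop : IsCoprime (h₁.map (Ideal.Quotient.mk (IsLocalRing.maximalIdeal S)))
      (h₂.map (Ideal.Quotient.mk (IsLocalRing.maximalIdeal S)))) :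
    Ideal.span ({P₁} : Set (Polynomial S)) ⊔ Ideal.span ({P₂} : Set (Polynomial S)) = ⊤ := by
  classical
  set 𝔭 := IsLocalRing.maximalIdeal S with h𝔭
  set I : Ideal (Polynomial S) := Ideal.span {P₁} ⊔ Ideal.span {P₂} with hIdef
  -- the reductions of P₁ and P₂ are coprime
  have hcopP : IsCoprime (P₁.map (Ideal.Quotient.mk 𝔭)) (P₂.map (Ideal.Quotient.mk 𝔭)) := by
    rw [hred₁, hred₂]; exact hcop.pow
  obtain ⟨a, b, hab⟩ := hcopP
  obtain ⟨A, hA⟩ := Polynomial.map_surjective _ Ideal.Quotient.mk_surjective a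
  obtain ⟨B, hB⟩ := Polynomial.map_surjective _ Ideal.Quotient.mk_surjective b
  set r : Polynomial S := 1 - (A * P₁ + B * P₂) with hr
  have hrcoeff : ∀ k, r.coeff k ∈ 𝔭 := by
    intro k
    have hmap : r.map (Ideal.Quotient.mk 𝔭) = 0 := by
      simp only [hr, Polynomial.map_sub, Polynomial.map_add, Polynomial.map_mul,
        Polynomial.map_one, hA, hB, hab, sub_self]
    have := congrArg (fun p => Polynomial.coeff p k) hmap
    simpa [Polynomial.coeff_map, Ideal.Quotient.eq_zero_iff_mem] using this
  -- the quotient S[t]/I is a finite S-module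
  have hfin : Module.Finite S (Polynomial S ⧸ I) := by
    have h1 : Module.Finite S (AdjoinRoot P₁) :=
      Module.Finite.of_basis (AdjoinRoot.powerBasis' hP₁).basis
    have hle : Ideal.span ({P₁} : Set (Polynomial S)) ≤ I := le_sup_left
    let f : AdjoinRoot P₁ →+* Polynomial S ⧸ I := Ideal.Quotient.factor hle
    have hsurj : Function.Surjective f := by
      intro x
      obtain ⟨q, rfl⟩ := Ideal.Quotient.mk_surjective x
      exact ⟨AdjoinRoot.mk P₁ q, Ideal.Quotient.factor_mk hle q⟩
    have hsmul : ∀ (c : S) (x : AdjoinRoot P₁), f (c • x) = c • f x := by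
      intro c x
      obtain ⟨q, rfl⟩ := Ideal.Quotient.mk_surjective x
      have h1 : (Ideal.Quotient.mk (Ideal.span ({P₁} : Set (Polynomial S)))) (c • q)
          = c • (Ideal.Quotient.mk _) q := rfl
      have h2 : (Ideal.Quotient.mk I) (c • q) = c • (Ideal.Quotient.mk I) q := rfl
      calc f (c • (Ideal.Quotient.mk _) q) = f ((Ideal.Quotient.mk _) (c • q)) := by rw [h1]; rfl
        _ = (Ideal.Quotient.mk I) (c • q) := Ideal.Quotient.factor_mk hle _
        _ = c • (Ideal.Quotient.mk I) q := h2
        _ = c • f ((Ideal.Quotient.mk _) q) :=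
            congrArg (c • ·) (Ideal.Quotient.factor_mk hle q).symm
    exact Module.Finite.of_surjective (AlgHom.mk' f hsmul).toLinearMap hsurj
  -- Nakayama: ⊤ ≤ 𝔭 • ⊤ in S[t]/I
  have htop : (⊤ : Submodule S (Polynomial S ⧸ I)) ≤ 𝔭 • ⊤ := by
    rintro x -
    obtain ⟨q, rfl⟩ := Ideal.Quotient.mk_surjective x
    have key : (Ideal.Quotient.mk I) q = (Ideal.Quotient.mk I) (r * q) := by
      rw [Ideal.Quotient.mk_eq_mk_iff_sub_mem]
      have hqr : q - r * q = (q * A) * P₁ + (q * B) * P₂ := by rw [hr]; ring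
      rw [hqr]
      exact I.add_mem
        (Ideal.mul_mem_left _ _ (le_sup_left (α := Ideal (Polynomial S))
          (Ideal.subset_span (Set.mem_singleton P₁))))
        (Ideal.mul_mem_left _ _ (le_sup_right (α := Ideal (Polynomial S))
          (Ideal.subset_span (Set.mem_singleton P₂))))
    rw [key]
    have hsum : r * q = r.sum fun k c => c • (Polynomial.X ^ k * q) := by
      conv_lhs => rw [← Polynomial.sum_C_mul_X_pow_eq r]
      rw [Polynomial.sum, Polynomial.sum, Finset.sum_mul]
      exact Finset.sum_congr rfl fun k _ => by
        rw [Polynomial.smul_eq_C_mul, mul_assoc]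
    rw [hsum, Polynomial.sum]
    rw [map_sum]
    refine Submodule.sum_mem _ fun k _ => ?_
    have : (Ideal.Quotient.mk I) (r.coeff k • (Polynomial.X ^ k * q))
        = r.coeff k • (Ideal.Quotient.mk I) (Polynomial.X ^ k * q) := rfl
    rw [this]
    exact Submodule.smul_mem_smul (hrcoeff k) Submodule.mem_top
  have hbot : (⊤ : Submodule S (Polynomial S ⧸ I)) = ⊥ :=
    Submodule.eq_bot_of_le_smul_of_le_jacobson_bot 𝔭 ⊤ Module.Finite.fg_top htop
      (IsLocalRing.maximalIdeal_le_jacobson ⊥)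
  have h1 : (Ideal.Quotient.mk I) 1 = 0 := by
    have : ((Ideal.Quotient.mk I) 1 : Polynomial S ⧸ I) ∈ (⊥ : Submodule S (Polynomial S ⧸ I)) := by
      rw [← hbot]; exact Submodule.mem_top
    simpa using this
  rw [Ideal.eq_top_iff_one]
  exact Ideal.Quotient.eq_zero_iff_mem.mp h1
end

section
/- Let T be a finitely generated free module over the ring of integers S of an unramified extension of Q_ℓ, with an S-linear operator x nilpotent modulo ℓ. If v₁,…,v_r ∈ T are such that v₁, xv₁, …, x^{m₁−1}v₁, …, v_r, …, x^{m_r−1}v_r form a Jordan basis of T/ℓT for x mod ℓ, then these elements form an S-basis of T (Nakayama), and the matrix H of x in this basis satisfies: for every size-m minor H_{i₁,…,i_m} (rows and columns indexed by the same set) with m > m₁+…+m_{s−1}, if H_{i₁,…,i_m} ≠ 0 then ν(H_{i₁,…,i_m}) ≥ s. -/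
open scoped Classical

-- det divisibility lemma
lemma det_dvd_of_cols {S : Type*} [CommRing S] {n : Type*} [Fintype n] [DecidableEq n]
    (M : Matrix n n S) (p : S) (C : Finset n) (h : ∀ j ∈ C, ∀ i, p ∣ M i j) :
    p ^ C.card ∣ M.det := by
  classical
  have hA : ∀ j (hj : j ∈ C) i, ∃ c, M i j = p * c := fun j hj i => h j hj i
  let A : Matrix n n S := Matrix.of fun i j =>
    if hj : j ∈ C then (hA j hj i).choose else M i j
  have hM : M = A * Matrix.diagonal (fun j => if j ∈ C then p else 1) := by
    ext i j
    rw [Matrix.mul_diagonal]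
    by_cases hj : j ∈ C
    · simp only [A, Matrix.of_apply, dif_pos hj, if_pos hj]
      rw [mul_comm]
      exact (hA j hj i).choose_spec
    · simp [A, hj]
  rw [hM, Matrix.det_mul, Matrix.det_diagonal]
  have : ∏ j, (if j ∈ C then p else 1) = p ^ C.card := by
    rw [Finset.prod_ite_mem, Finset.univ_inter, Finset.prod_const]
  rw [this]
  exact Dvd.intro _ (mul_comm _ _)


lemma sum_antitone_le {r : ℕ} (m : Fin r → ℕ) (hm : Antitone m)
    (B : Finset ℕ) (hB : ∀ b ∈ B, b < r) :
    ∑ t ∈ B, (if h : t < r then m ⟨t, h⟩ else 0) ≤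
      ∑ t ∈ Finset.univ.filter (fun t : Fin r => (t : ℕ) < B.card), m t := by
  classical
  have hcard : B.card ≤ r := by
    have : B ⊆ Finset.range r := fun b hb => Finset.mem_range.mpr (hB b hb)
    simpa using Finset.card_le_card this
  set k := B.card with hk
  let e := B.orderIsoOfFin rfl
  have hmono : StrictMono (fun i : Fin k => ((e i : ℕ))) := by
    intro a b hab
    exact_mod_cast e.strictMono hab
  have hle : ∀ n (h : n < k), n ≤ (e ⟨n, h⟩ : ℕ) := by
    intro n
    induction n with
    | zero => exact fun _ => Nat.zero_le _
    | succ n ih =>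
        intro h
        have hn : n < k := Nat.lt_of_succ_lt h
        have h1 : ((e ⟨n, hn⟩ : ℕ)) < (e ⟨n + 1, h⟩ : ℕ) :=
          hmono (show (⟨n, hn⟩ : Fin k) < ⟨n + 1, h⟩ by simp [Fin.lt_def])
        have := ih hn
        omega
  -- sum over B equals sum over Fin k
  have hsum1 : ∑ t ∈ B, (if h : t < r then m ⟨t, h⟩ else 0) =
      ∑ i : Fin k, (if h : ((e i : ℕ)) < r then m ⟨(e i : ℕ), h⟩ else 0) := by
    rw [← Finset.sum_attach B (fun t => if h : t < r then m ⟨t, h⟩ else 0)]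
    exact (Fintype.sum_equiv e.toEquiv _ _ (fun i => rfl)).symm
  rw [hsum1]
  have hsum2 : ∑ t ∈ Finset.univ.filter (fun t : Fin r => (t : ℕ) < k), m t =
      ∑ i : Fin k, m ⟨(i : ℕ), lt_of_lt_of_le i.2 hcard⟩ := by
    refine Finset.sum_bij' (i := fun (t : Fin r) (ht : t ∈ Finset.univ.filter (fun t : Fin r => (t : ℕ) < k)) => (⟨(t : ℕ), (Finset.mem_filter.mp ht).2⟩ : Fin k))
      (j := fun (i : Fin k) _ => (⟨(i : ℕ), lt_of_lt_of_le i.2 hcard⟩ : Fin r)) ?_ ?_ ?_ ?_ ?_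
    · intro a ha; exact Finset.mem_univ _
    · intro a ha; exact Finset.mem_filter.mpr ⟨Finset.mem_univ _, a.2⟩
    · intro a ha; rfl
    · intro a ha; rfl
    · intro a ha; rfl
  rw [hsum2]
  refine Finset.sum_le_sum fun i _ => ?_
  have her : ((e i : ℕ)) < r := hB _ (e i).2
  rw [dif_pos her]
  exact hm (show (⟨(i : ℕ), _⟩ : Fin r) ≤ ⟨(e i : ℕ), her⟩ from hle i i.2)

lemma counting {r d : ℕ} (m : Fin r → ℕ) (hm : Antitone m) (hm1 : ∀ i, 1 ≤ m i)
    (hsum : ∑ i, m i = d) (I : Finset (Fin d)) :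
    I.card ≤ ∑ t ∈ Finset.univ.filter (fun t : Fin r =>
      (t : ℕ) < (I.filter (fun j : Fin d =>
        (∃ s : Fin r, (j : ℕ) + 1 = ∑ u ∈ Finset.Iic s, m u) ∨
        ∀ i ∈ I, (i : ℕ) ≠ (j : ℕ) + 1)).card), m t := by
  by_cases hd : d = 0
  · subst hd
    have : I = ∅ := Finset.eq_empty_of_isEmpty I
    simp [this]
  have hr : 0 < r := by
    by_contra hr
    push_neg at hr
    interval_cases r
    simp at hsum
    omega
  -- the partial sums
  set A : ℕ → ℕ := fun t => ∑ u ∈ Finset.univ.filter (fun u : Fin r => (u : ℕ) ≤ t), m u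
    with hAdef
  have hA_Iic : ∀ s : Fin r, ∑ u ∈ Finset.Iic s, m u = A (s : ℕ) := by
    intro s
    apply Finset.sum_congr _ (fun _ _ => rfl)
    ext u
    simp only [Finset.mem_Iic, Finset.mem_filter, Finset.mem_univ, true_and]
    exact Fin.le_def
  have hAd : A (r - 1) = d := by
    simp only [hAdef]
    rw [← hsum]
    apply Finset.sum_congr _ (fun _ _ => rfl)
    rw [Finset.filter_true_of_mem]
    intro u _
    omega
  have hA0 : A 0 = m ⟨0, hr⟩ := by
    simp only [hAdef]
    rw [show Finset.univ.filter (fun u : Fin r => (u : ℕ) ≤ 0) = {⟨0, hr⟩} by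
      ext u; simp [Fin.ext_iff]]
    simp
  have hAstep : ∀ t (ht : t + 1 < r), A (t + 1) = A t + m ⟨t + 1, ht⟩ := by
    intro t ht
    simp only [hAdef]
    rw [show Finset.univ.filter (fun u : Fin r => (u : ℕ) ≤ t + 1) =
        insert ⟨t + 1, ht⟩ (Finset.univ.filter (fun u : Fin r => (u : ℕ) ≤ t)) by
      ext u; simp [Fin.ext_iff]; omega]
    rw [Finset.sum_insert (by simp)]
    ring
  have hmA : ∀ t (ht : t < r), m ⟨t, ht⟩ ≤ A t := by
    intro t ht
    exact Finset.single_le_sum (fun _ _ => Nat.zero_le _) (by simp)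
  -- the block function
  have hPex : ∀ x : ℕ, ∃ t, x < A t ∨ r ≤ t := fun x => ⟨r, Or.inr le_rfl⟩
  set blk : ℕ → ℕ := fun x => Nat.find (hPex x) with hblkdef
  have hblk_lt : ∀ x, x < d → blk x < r := by
    intro x hx
    have h1 : blk x ≤ r - 1 := Nat.find_le (Or.inl (by rw [hAd]; exact hx))
    omega
  have hblk_spec : ∀ x, x < d → x < A (blk x) := by
    intro x hx
    have h1 : x < A (blk x) ∨ r ≤ blk x := Nat.find_spec (hPex x)
    have h2 := hblk_lt x hx
    rcases h1 with h | h
    · exact h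
    · omega
  have hblk_min : ∀ x t, t < blk x → A t ≤ x := by
    intro x t ht
    have h1 : ¬ (x < A t ∨ r ≤ t) := Nat.find_min (hPex x) ht
    push_neg at h1
    exact h1.1
  have hblk_eq : ∀ x y, x ≤ y → y < A (blk x) → blk y = blk x := by
    intro x y hxy hy
    apply le_antisymm
    · exact Nat.find_le (Or.inl hy)
    · apply Nat.find_le
      have hs : y < A (blk y) ∨ r ≤ blk y := Nat.find_spec (hPex y)
      rcases hs with h | h
      · exact Or.inl (lt_of_le_of_lt hxy h)
      · exact Or.inr h
  -- J, bad, chains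
  set J : Finset ℕ := I.image Fin.val with hJdef
  have hJd : ∀ x ∈ J, x < d := by
    intro x hx
    obtain ⟨i, _, rfl⟩ := Finset.mem_image.mp hx
    exact i.2
  have hJcard : J.card = I.card := Finset.card_image_of_injective _ Fin.val_injective
  set badN : ℕ → Prop := fun j => (∃ s : Fin r, j + 1 = A s) ∨ (j + 1) ∉ J with hbadNdef
  have hstop : ∀ j : ℕ, ∃ n, ¬ ((j + n) ∈ J ∧ ¬ badN (j + n)) :=
    fun j => ⟨d, fun hc => absurd (hJd _ hc.1) (by omega)⟩
  set N : ℕ → ℕ := fun j => Nat.find (hstop j) with hNdef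
  set c : ℕ → ℕ := fun j => j + N j with hcdef
  have hchain : ∀ j ∈ J, ∀ n, n ≤ N j →
      (j + n) ∈ J ∧ (0 < n → ¬ ∃ s : Fin r, j + n = A s) := by
    intro j hj n
    induction n with
    | zero => exact fun _ => ⟨by simpa using hj, fun h => absurd h (by omega)⟩
    | succ n ih =>
        intro hn
        have hn' : n < N j := by omega
        have h1 : ¬ ¬ ((j + n) ∈ J ∧ ¬ badN (j + n)) := Nat.find_min (hstop j) hn'
        push_neg at h1
        have h2 : ¬ badN (j + n) := h1.2
        simp only [hbadNdef] at h2
        push_neg at h2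
        constructor
        · rw [show j + (n + 1) = j + n + 1 by omega]
          exact h2.2
        · intro _ hx
          obtain ⟨s, hs⟩ := hx
          exact h2.1 s (by rw [show j + n + 1 = j + (n + 1) by omega]; exact hs)
  have hc_mem : ∀ j ∈ J, c j ∈ J := fun j hj => (hchain j hj (N j) le_rfl).1
  have hc_bad : ∀ j ∈ J, badN (c j) := by
    intro j hj
    have h1 : ¬ ((j + N j) ∈ J ∧ ¬ badN (j + N j)) := Nat.find_spec (hstop j)
    by_contra hb
    exact h1 ⟨hc_mem j hj, hb⟩
  have hc_blk : ∀ j ∈ J, blk (c j) = blk j := by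
    intro j hj
    apply hblk_eq j (c j) (Nat.le_add_right _ _)
    by_contra hcon
    push_neg at hcon
    have hjlt : j < A (blk j) := hblk_spec j (hJd j hj)
    have hblkr : blk j < r := hblk_lt j (hJd j hj)
    have hcon2 : A (blk j) ≤ j + N j := hcon
    set n := A (blk j) - j with hn
    have hn0 : 0 < n := by omega
    have hnN : n ≤ N j := by omega
    refine (hchain j hj n hnN).2 hn0 ⟨⟨blk j, hblkr⟩, ?_⟩
    show j + n = A (blk j)
    omega
  -- fiberwise counting
  set BadJ := J.filter badN with hBadJ
  set k := BadJ.card with hk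
  set Tset := BadJ.image blk with hTset
  have hTr : ∀ t ∈ Tset, t < r := by
    intro t ht
    obtain ⟨b, hb, rfl⟩ := Finset.mem_image.mp ht
    exact hblk_lt b (hJd b (Finset.mem_filter.mp hb).1)
  have hTcard : Tset.card ≤ k := Finset.card_image_le
  have hfib : J.card = ∑ t ∈ Tset, (J.filter (fun j => blk (c j) = t)).card := by
    apply Finset.card_eq_sum_card_fiberwise
    intro j hj
    exact Finset.mem_image.mpr ⟨c j, Finset.mem_filter.mpr ⟨hc_mem j hj, hc_bad j hj⟩, rfl⟩
  have hfib_le : ∀ t ∈ Tset, (J.filter (fun j => blk (c j) = t)).card ≤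
      (if h : t < r then m ⟨t, h⟩ else 0) := by
    intro t ht
    have htr := hTr t ht
    rw [dif_pos htr]
    have hsub : J.filter (fun j => blk (c j) = t) ⊆
        Finset.Ico (A t - m ⟨t, htr⟩) (A t) := by
      intro j hj
      obtain ⟨hjJ, hjt⟩ := Finset.mem_filter.mp hj
      have hblkj : blk j = t := by rw [← hc_blk j hjJ]; exact hjt
      have hjlt : j < A t := by rw [← hblkj]; exact hblk_spec j (hJd j hjJ)
      rw [Finset.mem_Ico]
      refine ⟨?_, hjlt⟩
      rcases Nat.eq_zero_or_pos t with ht0 | ht0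
      · subst ht0
        have : A 0 = m ⟨0, htr⟩ := hA0
        omega
      · obtain ⟨u, rfl⟩ : ∃ u, t = u + 1 := ⟨t - 1, by omega⟩
        have h1 : A u ≤ j := hblk_min j u (by omega)
        have h2 := hAstep u htr
        omega
    calc (J.filter (fun j => blk (c j) = t)).card
        ≤ (Finset.Ico (A t - m ⟨t, htr⟩) (A t)).card := Finset.card_le_card hsub
      _ ≤ m ⟨t, htr⟩ := by
          rw [Nat.card_Ico]
          omega
  -- identify the bad set with the Fin-version
  have hkI : (I.filter (fun j : Fin d =>
      (∃ s : Fin r, (j : ℕ) + 1 = ∑ u ∈ Finset.Iic s, m u) ∨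
      ∀ i ∈ I, (i : ℕ) ≠ (j : ℕ) + 1)).card = k := by
    rw [hk, hBadJ]
    rw [show J.filter badN = (I.filter (fun j : Fin d =>
        (∃ s : Fin r, (j : ℕ) + 1 = ∑ u ∈ Finset.Iic s, m u) ∨
        ∀ i ∈ I, (i : ℕ) ≠ (j : ℕ) + 1)).image Fin.val by
      ext x
      simp only [Finset.mem_filter, Finset.mem_image, hJdef, hbadNdef]
      constructor
      · rintro ⟨⟨i, hi, rfl⟩, hbad⟩
        refine ⟨i, ⟨hi, ?_⟩, rfl⟩
        rcases hbad with ⟨s, hs⟩ | hnm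
        · exact Or.inl ⟨s, by rw [hA_Iic s]; exact hs⟩
        · refine Or.inr fun i' hi' hc => hnm ?_
          exact ⟨i', hi', hc⟩
      · rintro ⟨i, ⟨hi, hbad⟩, rfl⟩
        refine ⟨⟨i, hi, rfl⟩, ?_⟩
        rcases hbad with ⟨s, hs⟩ | hnm
        · exact Or.inl ⟨s, by rw [← hA_Iic s]; exact hs⟩
        · refine Or.inr fun hc => ?_
          obtain ⟨i', hi', hv⟩ := hc
          exact hnm i' hi' hv]
    exact (Finset.card_image_of_injective _ Fin.val_injective).symm
  rw [hkI]
  calc I.card = J.card := hJcard.symm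
    _ = ∑ t ∈ Tset, (J.filter (fun j => blk (c j) = t)).card := hfib
    _ ≤ ∑ t ∈ Tset, (if h : t < r then m ⟨t, h⟩ else 0) := Finset.sum_le_sum hfib_le
    _ ≤ ∑ t ∈ Finset.univ.filter (fun t : Fin r => (t : ℕ) < Tset.card), m t :=
        sum_antitone_le m hm Tset hTr
    _ ≤ ∑ t ∈ Finset.univ.filter (fun t : Fin r => (t : ℕ) < k), m t := by
        apply Finset.sum_le_sum_of_subset
        intro t ht
        simp only [Finset.mem_filter] at ht ⊢
        exact ⟨ht.1, lt_of_lt_of_le ht.2 hTcard⟩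


/-- if `v 0, …, v (d-1)` reduce modulo `ℓ` to a Jordan basis for `x`
(expressed by: they span `T` together with `ℓT`, and the matrix `H` of `x` in them
reduces to the Jordan matrix with cells `m 0 ≥ … ≥ m (r-1)`), then by Nakayama they
form an `S`-basis of `T`, and every principal `m × m` minor of `H` with
`m > m₁ + ⋯ + m_{s-1}` has valuation at least `s` (equivalently is divisible by `ℓ^s`). -/
theorem jordan_basis_minor_valuation
    (ℓ : ℕ) [Fact ℓ.Prime] {S : Type*} [CommRing S] [IsDomain S] [IsDiscreteValuationRing S]
    (hℓ : Irreducible (ℓ : S))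
    {T : Type*} [AddCommGroup T] [Module S T]
    (d r : ℕ) (m : Fin r → ℕ) (hm : Antitone m) (hm1 : ∀ i, 1 ≤ m i)
    (hsum : ∑ i, m i = d)
    (b₀ : Module.Basis (Fin d) S T)
    (x : T →ₗ[S] T) (v : Fin d → T)
    (hspan : Submodule.span S (Set.range v) ⊔
      (Ideal.span {(ℓ : S)}) • (⊤ : Submodule S T) = ⊤)
    (H : Matrix (Fin d) (Fin d) S)
    (hH : ∀ j, x (v j) = ∑ i, H i j • v i)
    (hred : H.map (Ideal.Quotient.mk (Ideal.span {(ℓ : S)})) =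
      jordanNilpotent r d m (S ⧸ Ideal.span {(ℓ : S)})) :
    (∃ b : Module.Basis (Fin d) S T, ∀ i, b i = v i) ∧
    ∀ s : ℕ, s ≤ r → ∀ I : Finset (Fin d),
      (∑ t ∈ Finset.univ.filter (fun t : Fin r => (t : ℕ) < s - 1), m t) < I.card →
      (ℓ : S) ^ s ∣
        (H.submatrix (fun i : {a // a ∈ I} => (i : Fin d))
          (fun i : {a // a ∈ I} => (i : Fin d))).det := by
  constructor
  -- Part 1: Nakayama
  · haveI : Module.Finite S T := Module.Finite.of_basis b₀
    have hJ : Ideal.span {(ℓ : S)} ≤ Ideal.jacobson ⊥ := by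
      rw [IsLocalRing.jacobson_eq_maximalIdeal ⊥ bot_ne_top]
      exact IsLocalRing.le_maximalIdeal (by
        simpa [Ideal.span_singleton_eq_top] using hℓ.not_isUnit)
    have hsp : Submodule.span S (Set.range v) = ⊤ := by
      refine le_antisymm le_top ?_
      exact Submodule.le_of_le_smul_of_le_jacobson_bot (Module.Finite.fg_top) hJ (by rw [hspan])
    -- surjective endomorphism
    let f : (Fin d → S) →ₗ[S] T := Fintype.linearCombination S v
    have hfsurj : Function.Surjective f := by
      rw [← LinearMap.range_eq_top, Fintype.range_linearCombination, hsp]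
    let g : T →ₗ[S] T := f ∘ₗ (b₀.equivFun : T →ₗ[S] (Fin d → S))
    have hgsurj : Function.Surjective g :=
      hfsurj.comp b₀.equivFun.surjective
    have hginj : Function.Injective g :=
      OrzechProperty.injective_of_surjective_endomorphism g hgsurj
    have hfinj : Function.Injective f := by
      intro a b hab
      have h2 : g (b₀.equivFun.symm a) = g (b₀.equivFun.symm b) := by
        simp only [g, LinearMap.comp_apply, LinearEquiv.coe_coe, LinearEquiv.apply_symm_apply]
        exact hab
      have h3 := hginj h2
      have h4 := congrArg b₀.equivFun h3
      rwa [LinearEquiv.apply_symm_apply, LinearEquiv.apply_symm_apply] at h4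
    have hli : LinearIndependent S v := by
      rw [Fintype.linearIndependent_iff]
      intro c hc i
      have : f c = f 0 := by simp [f, Fintype.linearCombination_apply, hc]
      have := hfinj this
      simpa using congrFun this i
    exact ⟨Module.Basis.mk hli (by rw [hsp]), fun i => Module.Basis.mk_apply _ _ _⟩
  -- Part 2: minor valuation
  · intro s hs I hcard
    set badFin : Fin d → Prop := fun j =>
      (∃ s : Fin r, (j : ℕ) + 1 = ∑ u ∈ Finset.Iic s, m u) ∨
      ∀ i ∈ I, (i : ℕ) ≠ (j : ℕ) + 1 with hbadFin
    set k := (I.filter badFin).card with hk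
    have hcount := counting m hm hm1 hsum I
    have hsk : s ≤ k := by
      by_contra hsk
      push_neg at hsk
      have hsub : Finset.univ.filter (fun t : Fin r => (t : ℕ) < k) ⊆
          Finset.univ.filter (fun t : Fin r => (t : ℕ) < s - 1) := by
        intro t ht
        simp only [Finset.mem_filter] at ht ⊢
        exact ⟨ht.1, by omega⟩
      have h2 : I.card ≤
          ∑ t ∈ Finset.univ.filter (fun t : Fin r => (t : ℕ) < s - 1), m t :=
        le_trans hcount (Finset.sum_le_sum_of_subset hsub)
      omega
    -- divisibility by ℓ^k
    set C : Finset {a // a ∈ I} := Finset.univ.filter (fun p : {a // a ∈ I} => badFin ↑p)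
      with hC
    have hCcard : C.card = k := by
      rw [hk, hC]
      apply Finset.card_bij (fun (p : {a // a ∈ I}) _ => (p : Fin d))
      · intro a ha
        simp only [Finset.mem_filter] at ha ⊢
        exact ⟨a.2, ha.2⟩
      · intro a _ b _ hab
        exact Subtype.ext hab
      · intro b hb
        simp only [Finset.mem_filter] at hb
        exact ⟨⟨b, hb.1⟩, by simp [hb.2], rfl⟩
    have hdvd : (ℓ : S) ^ C.card ∣
        (H.submatrix (fun i : {a // a ∈ I} => (i : Fin d))
          (fun i : {a // a ∈ I} => (i : Fin d))).det := by
      apply det_dvd_of_cols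
      intro p hp q
      have hbad : badFin ↑p := (Finset.mem_filter.mp hp).2
      rw [Matrix.submatrix_apply]
      have h1 : Ideal.Quotient.mk (Ideal.span {(ℓ : S)}) (H ↑q ↑p) =
          jordanNilpotent r d m (S ⧸ Ideal.span {(ℓ : S)}) ↑q ↑p := by
        exact congrFun (congrFun hred ↑q) ↑p
      have h2 : jordanNilpotent r d m (S ⧸ Ideal.span {(ℓ : S)}) (↑q : Fin d) ↑p = 0 := by
        rw [jordanNilpotent, Matrix.of_apply, if_neg]
        rintro ⟨hq1, hq2⟩
        rcases hbad with ⟨s0, hs0⟩ | hall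
        · exact hq2 s0 (by rw [hq1]; exact hs0)
        · exact hall ↑q q.2 hq1
      rw [h2] at h1
      rw [← Ideal.mem_span_singleton]
      exact Ideal.Quotient.eq_zero_iff_mem.mp h1
    rw [hCcard] at hdvd
    exact dvd_trans (pow_dvd_pow _ hsk) hdvd
end
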